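/- arXiv:1510.00086 — 8 statements merged into one kernel-verified Lean document; each statement's English description precedes it below -/
import Mathlib

section
/- In a bipartite market with buyers B, sellers S, edges E, and valuations val : B ∪ S → [0,1], a valid state (P, Π) is stable (i.e., P(B) ≤ P(S) for every edge (B,S), every unmatched agent Z has P(Z) = val(Z), and every matched pair (B,S) ∈ Π has P(B) = P(S)) if and only if the characteristic vector x^Π of the matching Π is an optimal solution to the maximum-weight bipartite matching LP with edge weights w(B,S) = val(B) − val(S), and the utility vector y^P given by y^P(B) = val(B) − P(B), y^P(S) = P(S) − val(S) is an optimal solution to its dual LP. -/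
/-!
Weak duality gives one direction: for a stable state the matching is tight and every agent with
positive utility is matched, so `x^Π` and `y^P` have the same objective value. For the converse,
the utility of an unmatched agent must vanish, which is complementary slackness once strong
duality is known. Strong duality is obtained from Hall's theorem applied to a doubled tight
graph: a violation of Hall's condition yields a direction that strictly decreases the dual
objective, and a perfect matching of the doubled graph yields a tight matching that covers every
agent of positive utility.
-/

open Finset

/-- A market: buyers `B`, sellers `S`, trading edges `E`, valuations in `[0,1]`. -/
structure Market (B S : Type*) [Fintype B] [Fintype S] where
  E : Finset (B × S)
  valB : B → ℝ
  valS : S → ℝ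
  valB_nonneg : ∀ b, 0 ≤ valB b
  valB_le_one : ∀ b, valB b ≤ 1
  valS_nonneg : ∀ s, 0 ≤ valS s
  valS_le_one : ∀ s, valS s ≤ 1

/-- A state of the market: prices submitted by buyers and sellers, and a matching. -/
structure MState (B S : Type*) where
  PB : B → ℝ
  PS : S → ℝ
  M : Finset (B × S)

variable {B S : Type*} [Fintype B] [Fintype S]

/-- `Mat` is a matching contained in the edge set. -/
def IsMatching (Mk : Market B S) (Mat : Finset (B × S)) : Prop :=
  Mat ⊆ Mk.E ∧ (∀ p ∈ Mat, ∀ q ∈ Mat, p.1 = q.1 → p = q) ∧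
    (∀ p ∈ Mat, ∀ q ∈ Mat, p.2 = q.2 → p = q)

def BMatched (st : MState B S) (b : B) : Prop := ∃ s, (b, s) ∈ st.M
def SMatched (st : MState B S) (s : S) : Prop := ∃ b, (b, s) ∈ st.M

/-- A valid state: bids below valuations, offers above opportunity costs,
and within a matched pair the bid is at least the offer. -/
def ValidState (Mk : Market B S) (st : MState B S) : Prop :=
  IsMatching Mk st.M ∧ (∀ b, st.PB b ≤ Mk.valB b) ∧ (∀ s, Mk.valS s ≤ st.PS s) ∧
    ∀ p ∈ st.M, st.PS p.2 ≤ st.PB p.1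

/-- Social welfare of a matching. -/
def SW (Mk : Market B S) (Mat : Finset (B × S)) : ℝ :=
  ∑ p ∈ Mat, (Mk.valB p.1 - Mk.valS p.2)

/-- Stable state: no bid above an offer on any edge, unmatched agents submit their
valuations, matched pairs have equal prices. -/
def IsStable (Mk : Market B S) (st : MState B S) : Prop :=
  (∀ p ∈ Mk.E, st.PB p.1 ≤ st.PS p.2) ∧
  (∀ b, ¬ BMatched st b → st.PB b = Mk.valB b) ∧
  (∀ s, ¬ SMatched st s → st.PS s = Mk.valS s) ∧
  ∀ p ∈ st.M, st.PB p.1 = st.PS p.2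

/-- ε-stable state. -/
def IsEpsStable (Mk : Market B S) (ε : ℝ) (st : MState B S) : Prop :=
  (∀ p ∈ Mk.E, st.PB p.1 - st.PS p.2 ≤ ε) ∧
  (∀ b, ¬ BMatched st b → st.PB b = Mk.valB b) ∧
  (∀ s, ¬ SMatched st s → st.PS s = Mk.valS s) ∧
  ∀ p ∈ st.M, st.PB p.1 = st.PS p.2

/-- Weight of an edge: gain from trade. -/
def edgeWeight (Mk : Market B S) (p : B × S) : ℝ := Mk.valB p.1 - Mk.valS p.2

/-- Feasible solution of the primal (fractional matching) LP. -/
def PrimalFeasible (Mk : Market B S) (x : B × S → ℝ) : Prop :=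
  (∀ p, 0 ≤ x p) ∧ (∀ p, p ∉ Mk.E → x p = 0) ∧
  (∀ b : B, ∑ s : S, x (b, s) ≤ 1) ∧ (∀ s : S, ∑ b : B, x (b, s) ≤ 1)

def PrimalValue (Mk : Market B S) (x : B × S → ℝ) : ℝ :=
  ∑ p ∈ Mk.E, edgeWeight Mk p * x p

def PrimalOptimal (Mk : Market B S) (x : B × S → ℝ) : Prop :=
  PrimalFeasible Mk x ∧
  ∀ x' : B × S → ℝ, PrimalFeasible Mk x' → PrimalValue Mk x' ≤ PrimalValue Mk x

/-- Feasible solution of the dual LP. -/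
def DualFeasible (Mk : Market B S) (yB : B → ℝ) (yS : S → ℝ) : Prop :=
  (∀ b, 0 ≤ yB b) ∧ (∀ s, 0 ≤ yS s) ∧
  ∀ p ∈ Mk.E, edgeWeight Mk p ≤ yB p.1 + yS p.2

def DualValue (yB : B → ℝ) (yS : S → ℝ) : ℝ := ∑ b : B, yB b + ∑ s : S, yS s

def DualOptimal (Mk : Market B S) (yB : B → ℝ) (yS : S → ℝ) : Prop :=
  DualFeasible Mk yB yS ∧
  ∀ yB' yS', DualFeasible Mk yB' yS' → DualValue yB yS ≤ DualValue yB' yS'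

/-- Characteristic vector of a matching. -/
def charVec [DecidableEq B] [DecidableEq S] (Mat : Finset (B × S)) : B × S → ℝ :=
  fun p => if p ∈ Mat then 1 else 0

open Filter Topology

theorem eventually_le_add_mul_of_le {a b c : ℝ} (hab : a ≤ b) (hc : a = b → 0 ≤ c) :
    ∀ᶠ ε in 𝓝[>] 0, a ≤ b + ε * c := by
  rcases hab.lt_or_eq with hlt | heq
  · have hcont : Continuous fun ε : ℝ => b + ε * c := by fun_prop
    have hlim := (hcont.tendsto' 0 b (by simp)).mono_left (nhdsWithin_le_nhds (s := Set.Ioi 0))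
    exact (hlim.eventually (lt_mem_nhds hlt)).mono fun _ => le_of_lt
  · filter_upwards [self_mem_nhdsWithin] with ε hε
    nlinarith [hc heq, hε.out]

section Duality

variable {Mk : Market B S} {yB : B → ℝ} {yS : S → ℝ}

def IsTight (Mk : Market B S) (yB : B → ℝ) (yS : S → ℝ) (p : B × S) : Prop :=
  p ∈ Mk.E ∧ edgeWeight Mk p = yB p.1 + yS p.2

theorem primalValue_le_dualValue {x : B × S → ℝ} (hx : PrimalFeasible Mk x)
    (hy : DualFeasible Mk yB yS) : PrimalValue Mk x ≤ DualValue yB yS := by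
  obtain ⟨hx0, hxE, hxB, hxS⟩ := hx
  obtain ⟨hyB, hyS, hyE⟩ := hy
  calc PrimalValue Mk x ≤ ∑ p ∈ Mk.E, (yB p.1 + yS p.2) * x p :=
        sum_le_sum fun p hp => mul_le_mul_of_nonneg_right (hyE p hp) (hx0 p)
    _ = ∑ p : B × S, (yB p.1 + yS p.2) * x p :=
        sum_subset (subset_univ _) fun p _ hp => by rw [hxE p hp, mul_zero]
    _ = ∑ b, yB b * ∑ s, x (b, s) + ∑ s, yS s * ∑ b, x (b, s) := by
        simp only [Fintype.sum_prod_type, add_mul, sum_add_distrib, mul_sum]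
        rw [sum_comm (f := fun b s => yS s * x (b, s))]
    _ ≤ ∑ b, yB b + ∑ s, yS s :=
        add_le_add (sum_le_sum fun b _ => mul_le_of_le_one_right (hyB b) (hxB b))
          (sum_le_sum fun s _ => mul_le_of_le_one_right (hyS s) (hxS s))

theorem optimal_of_primalValue_eq_dualValue {x : B × S → ℝ} (hx : PrimalFeasible Mk x)
    (hy : DualFeasible Mk yB yS) (heq : PrimalValue Mk x = DualValue yB yS) :
    PrimalOptimal Mk x ∧ DualOptimal Mk yB yS :=
  ⟨⟨hx, fun _ hx' => heq ▸ primalValue_le_dualValue hx' hy⟩,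
    ⟨hy, fun _ _ hy' => heq ▸ primalValue_le_dualValue hx hy'⟩⟩

theorem DualOptimal.sum_nonneg_of_feasible_direction (hy : DualOptimal Mk yB yS)
    {dB : B → ℝ} {dS : S → ℝ} (hdB : ∀ b, yB b = 0 → 0 ≤ dB b)
    (hdS : ∀ s, yS s = 0 → 0 ≤ dS s) (hd : ∀ p, IsTight Mk yB yS p → 0 ≤ dB p.1 + dS p.2) :
    0 ≤ ∑ b, dB b + ∑ s, dS s := by
  obtain ⟨⟨hyB, hyS, hyE⟩, hmin⟩ := hy
  have hfeas : ∀ᶠ ε in 𝓝[>] 0,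
      DualFeasible Mk (fun b => yB b + ε * dB b) (fun s => yS s + ε * dS s) := by
    have hB := eventually_all.2 fun b => eventually_le_add_mul_of_le (hyB b) fun h => hdB b h.symm
    have hS := eventually_all.2 fun s => eventually_le_add_mul_of_le (hyS s) fun h => hdS s h.symm
    have hE := (eventually_all_finset Mk.E).2 fun p hp =>
      eventually_le_add_mul_of_le (hyE p hp) fun h => hd p ⟨hp, h⟩
    filter_upwards [hB, hS, hE] with ε hεB hεS hεE
    exact ⟨hεB, hεS, fun p hp => by linarith [hεE p hp]⟩
  obtain ⟨ε, hεfeas, hεpos⟩ := (hfeas.and self_mem_nhdsWithin).exists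
  have hle := hmin _ _ hεfeas
  simp only [DualValue, sum_add_distrib, ← mul_sum] at hle
  exact nonneg_of_mul_nonneg_right (by linarith) hεpos

theorem dualValue_eq_sum_add_sum_unmatched [DecidableEq B] [DecidableEq S] {N : Finset (B × S)}
    (hN : IsMatching Mk N) :
    DualValue yB yS = ∑ p ∈ N, (yB p.1 + yS p.2) +
      (∑ b ∈ univ \ N.image Prod.fst, yB b + ∑ s ∈ univ \ N.image Prod.snd, yS s) := by
  have hB := sum_sdiff (f := yB) (subset_univ (N.image Prod.fst))
  have hS := sum_sdiff (f := yS) (subset_univ (N.image Prod.snd))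
  rw [sum_image fun p hp q hq => hN.2.1 p hp q hq] at hB
  rw [sum_image fun p hp q hq => hN.2.2 p hp q hq] at hS
  rw [DualValue, sum_add_distrib]
  linarith

theorem dualValue_eq_weight_of_tight {N : Finset (B × S)} (hN : IsMatching Mk N)
    (htight : ∀ p ∈ N, edgeWeight Mk p = yB p.1 + yS p.2)
    (hB : ∀ b, (¬ ∃ s, (b, s) ∈ N) → yB b = 0) (hS : ∀ s, (¬ ∃ b, (b, s) ∈ N) → yS s = 0) :
    DualValue yB yS = ∑ p ∈ N, edgeWeight Mk p := by
  classical
  rw [dualValue_eq_sum_add_sum_unmatched hN, sum_congr rfl htight,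
    sum_eq_zero fun b hb => hB b (by simpa using hb),
    sum_eq_zero fun s hs => hS s (by simpa using hs)]
  ring

/-- Adjacency of the doubled tight graph, with left part `B ⊕ S` and right part `S ⊕ B`: besides
the tight edges, taken once in each orientation, an agent of utility zero is joined to its own
copy, which lets it stay unmatched. -/
def doubledTightAdj (Mk : Market B S) (yB : B → ℝ) (yS : S → ℝ) : B ⊕ S → S ⊕ B → Prop
  | .inl b, .inl s => IsTight Mk yB yS (b, s)
  | .inl b, .inr b' => b' = b ∧ yB b = 0
  | .inr s, .inl s' => s' = s ∧ yS s = 0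
  | .inr s, .inr b => IsTight Mk yB yS (b, s)

theorem card_eq_sum_inl_add_sum_inr {α β : Type*} [Fintype α] [Fintype β] [DecidableEq α]
    [DecidableEq β] (X : Finset (α ⊕ β)) :
    (#X : ℝ) = ∑ a, (if .inl a ∈ X then 1 else 0) + ∑ b, (if .inr b ∈ X then 1 else 0) := by
  rw [← Fintype.sum_sum_type (fun j => if j ∈ X then (1 : ℝ) else 0)]
  simp

open Classical in
theorem DualOptimal.hall_doubledTightAdj (hy : DualOptimal Mk yB yS) (A : Finset (B ⊕ S)) :
    #A ≤ #(A.biUnion fun i => univ.filter (doubledTightAdj Mk yB yS i)) := by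
  set NA := A.biUnion fun i => univ.filter (doubledTightAdj Mk yB yS i)
  have hNA : ∀ {i j}, i ∈ A → doubledTightAdj Mk yB yS i j → j ∈ NA := fun hi hij =>
    mem_biUnion.2 ⟨_, hi, mem_filter.2 ⟨mem_univ _, hij⟩⟩
  -- Lower the utility of each agent with a copy in `A`, raise that of each agent with a copy in
  -- `NA`: the dual objective changes by `#NA - #A`.
  have hsum := hy.sum_nonneg_of_feasible_direction
    (dB := fun b => (if .inr b ∈ NA then 1 else 0) - if .inl b ∈ A then 1 else 0)
    (dS := fun s => (if .inl s ∈ NA then 1 else 0) - if .inr s ∈ A then 1 else 0)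
    (fun b hb => by
      by_cases hbA : .inl b ∈ A
      · simp [hbA, hNA hbA (show doubledTightAdj Mk yB yS (.inl b) (.inr b) from ⟨rfl, hb⟩)]
      · simp only [hbA, if_false, sub_zero]; split_ifs <;> norm_num)
    (fun s hs => by
      by_cases hsA : .inr s ∈ A
      · simp [hsA, hNA hsA (show doubledTightAdj Mk yB yS (.inr s) (.inl s) from ⟨rfl, hs⟩)]
      · simp only [hsA, if_false, sub_zero]; split_ifs <;> norm_num)
    (fun p hp => by
      have hB : Sum.inl p.1 ∈ A → Sum.inl p.2 ∈ NA := fun h => hNA (j := .inl p.2) h hp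
      have hS : Sum.inr p.2 ∈ A → Sum.inr p.1 ∈ NA := fun h => hNA (j := .inr p.1) h hp
      split_ifs at * <;> simp_all)
  have hcard : (#A : ℝ) ≤ #NA := by
    rw [card_eq_sum_inl_add_sum_inr A, card_eq_sum_inl_add_sum_inr NA]
    simp only [sum_sub_distrib] at hsum
    linarith
  exact_mod_cast hcard

theorem DualOptimal.exists_matching_weight_eq_dualValue (hy : DualOptimal Mk yB yS) :
    ∃ N, IsMatching Mk N ∧ ∑ p ∈ N, edgeWeight Mk p = DualValue yB yS := by
  classical
  obtain ⟨f, hinj, hf⟩ := (all_card_le_biUnion_card_iff_exists_injective _).1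
    hy.hall_doubledTightAdj
  replace hf : ∀ i, doubledTightAdj Mk yB yS i (f i) := fun i => (mem_filter.1 (hf i)).2
  have hsurj := (Finite.injective_iff_surjective_of_equiv (Equiv.sumComm B S)).1 hinj
  set N := univ.filter fun p : B × S => f (.inl p.1) = .inl p.2
  have hmemN : ∀ {p}, p ∈ N ↔ f (.inl p.1) = .inl p.2 := by simp [N]
  have htight : ∀ p ∈ N, IsTight Mk yB yS p := fun p hp => by
    simpa [doubledTightAdj, hmemN.1 hp] using hf (.inl p.1)
  have hN : IsMatching Mk N := by
    refine ⟨fun p hp => (htight p hp).1, fun p hp q hq h => ?_, fun p hp q hq h => ?_⟩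
    · have := (hmemN.1 hp).symm.trans (h ▸ hmemN.1 hq)
      exact Prod.ext h (Sum.inl_injective this)
    · exact Prod.ext (Sum.inl_injective (hinj ((hmemN.1 hp).trans (h ▸ hmemN.1 hq).symm))) h
  refine ⟨N, hN, (dualValue_eq_weight_of_tight hN (fun p hp => (htight p hp).2) ?_ ?_).symm⟩
  · intro b hb
    have hfb := hf (.inl b)
    rcases hfbv : f (.inl b) with s | b'
    · exact absurd ⟨s, hmemN.2 hfbv⟩ hb
    · rw [hfbv] at hfb
      exact hfb.2
  · intro s hs
    obtain ⟨i, hi⟩ := hsurj (.inl s)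
    have hfi := hf i
    rcases i with b | s'
    · exact absurd ⟨b, hmemN.2 hi⟩ hs
    · rw [hi] at hfi
      exact hfi.1 ▸ hfi.2

theorem DualOptimal.eq_zero_of_unmatched (hy : DualOptimal Mk yB yS) {M : Finset (B × S)}
    (hM : IsMatching Mk M)
    (hmax : ∀ N, IsMatching Mk N → ∑ p ∈ N, edgeWeight Mk p ≤ ∑ p ∈ M, edgeWeight Mk p) :
    (∀ b, (¬ ∃ s, (b, s) ∈ M) → yB b = 0) ∧ (∀ s, (¬ ∃ b, (b, s) ∈ M) → yS s = 0) := by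
  classical
  obtain ⟨N, hN, hNval⟩ := hy.exists_matching_weight_eq_dualValue
  obtain ⟨⟨hyB, hyS, hyE⟩, -⟩ := hy
  have hMle : ∑ p ∈ M, edgeWeight Mk p ≤ ∑ p ∈ M, (yB p.1 + yS p.2) :=
    sum_le_sum fun p hp => hyE p (hM.1 hp)
  have hval := dualValue_eq_sum_add_sum_unmatched (yB := yB) (yS := yS) hM
  have hunB := sum_nonneg fun b (_ : b ∈ univ \ M.image Prod.fst) => hyB b
  have hunS := sum_nonneg fun s (_ : s ∈ univ \ M.image Prod.snd) => hyS s
  have hzeroB := (sum_eq_zero_iff_of_nonneg fun b _ => hyB b).1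
    (by linarith [hmax N hN] : ∑ b ∈ univ \ M.image Prod.fst, yB b = 0)
  have hzeroS := (sum_eq_zero_iff_of_nonneg fun s _ => hyS s).1
    (by linarith [hmax N hN] : ∑ s ∈ univ \ M.image Prod.snd, yS s = 0)
  exact ⟨fun b hb => hzeroB b (by simpa using hb), fun s hs => hzeroS s (by simpa using hs)⟩

end Duality

section CharVec

variable [DecidableEq B] [DecidableEq S] {Mk : Market B S}

theorem card_filter_mem_le_one {α β : Type*} [Fintype β] [DecidableEq α] {N : Finset α}
    {g : β → α} (hg : ∀ u v, g u ∈ N → g v ∈ N → u = v) :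
    #(univ.filter fun u => g u ∈ N) ≤ 1 :=
  card_le_one.2 fun u hu v hv => hg u v (mem_filter.1 hu).2 (mem_filter.1 hv).2

theorem charVec_primalFeasible {N : Finset (B × S)} (hN : IsMatching Mk N) :
    PrimalFeasible Mk (charVec N) := by
  refine ⟨fun p => ?_, fun p hp => if_neg fun h => hp (hN.1 h), fun b => ?_, fun s => ?_⟩
  · unfold charVec; split_ifs <;> norm_num
  · have := card_filter_mem_le_one (N := N) (g := fun s => (b, s))
      fun u v hu hv => congrArg Prod.snd (hN.2.1 _ hu _ hv rfl)
    simpa [charVec, sum_boole] using (Nat.cast_le (α := ℝ)).2 this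
  · have := card_filter_mem_le_one (N := N) (g := fun b => (b, s))
      fun u v hu hv => congrArg Prod.fst (hN.2.2 _ hu _ hv rfl)
    simpa [charVec, sum_boole] using (Nat.cast_le (α := ℝ)).2 this

theorem primalValue_charVec {N : Finset (B × S)} (hN : N ⊆ Mk.E) :
    PrimalValue Mk (charVec N) = ∑ p ∈ N, edgeWeight Mk p := by
  simp only [PrimalValue, charVec, mul_ite, mul_one, mul_zero]
  rw [← sum_filter, filter_mem_eq_inter, inter_eq_right.2 hN]

end CharVec

/-- a valid state is stable iff `x^Π` is primal optimal and `y^P`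
is dual optimal. -/
theorem stable_iff_primal_dual_optimal [DecidableEq B] [DecidableEq S]
    (Mk : Market B S) (st : MState B S) (hvalid : ValidState Mk st) :
    IsStable Mk st ↔
      PrimalOptimal Mk (charVec st.M) ∧
      DualOptimal Mk (fun b => Mk.valB b - st.PB b) (fun s => st.PS s - Mk.valS s) := by
  obtain ⟨hM, hPB, hPS, hpair⟩ := hvalid
  have hfeas : (∀ p ∈ Mk.E, st.PB p.1 ≤ st.PS p.2) ↔
      DualFeasible Mk (fun b => Mk.valB b - st.PB b) (fun s => st.PS s - Mk.valS s) := by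
    simp only [DualFeasible, edgeWeight, sub_nonneg, hPB, hPS, implies_true, true_and]
    exact forall₂_congr fun p _ => by constructor <;> intro h <;> linarith
  constructor
  · rintro ⟨hedge, hB, hS, hM_eq⟩
    refine optimal_of_primalValue_eq_dualValue (charVec_primalFeasible hM) (hfeas.1 hedge) ?_
    rw [primalValue_charVec hM.1, dualValue_eq_weight_of_tight hM
      (fun p hp => by simp [edgeWeight, hM_eq p hp])
      (fun b hb => by simp [hB b hb]) (fun s hs => by simp [hS s hs])]
  · rintro ⟨hx, hy⟩
    have hedge := hfeas.2 hy.1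
    obtain ⟨hB, hS⟩ := hy.eq_zero_of_unmatched hM fun N hN => by
      simpa only [primalValue_charVec hN.1, primalValue_charVec hM.1] using
        hx.2 _ (charVec_primalFeasible hN)
    exact ⟨hedge, fun b hb => by linarith [hB b hb], fun s hs => by linarith [hS s hs],
      fun p hp => (hedge p (hM.1 hp)).antisymm (hpair p hp)⟩
end

section
/- Every stable state of a market maximizes social welfare: if (P, Π) is a stable valid state, then for every matching Π' ⊆ E, Σ_{(B,S)∈Π} (val(B) − val(S)) ≥ Σ_{(B,S)∈Π'} (val(B) − val(S)). -/
open Finset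

variable {B S : Type*} [Fintype B] [Fintype S]

/-! The prices form a dual certificate. With the surpluses `u(B) = val(B) - P(B) ≥ 0` and
`u(S) = P(S) - val(S) ≥ 0`, every edge satisfies `val(B) - val(S) ≤ u(B) + u(S)` because
`P(B) ≤ P(S)` there, so any matching has welfare at most the total surplus. In a stable state
the matching `Π` attains this bound: matched pairs trade at equal prices, and unmatched agents
have zero surplus. -/

section PairSums

variable {α β M : Type*} [Fintype α] [Fintype β] {s : Finset (α × β)}

theorem sum_fst_add_snd_le_of_injOn [AddCommMonoid M] [PartialOrder M] [IsOrderedAddMonoid M]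
    (h₁ : Set.InjOn Prod.fst (s : Set (α × β))) (h₂ : Set.InjOn Prod.snd (s : Set (α × β)))
    {f : α → M} {g : β → M} (hf : 0 ≤ f) (hg : 0 ≤ g) :
    ∑ p ∈ s, (f p.1 + g p.2) ≤ ∑ a, f a + ∑ b, g b := by
  classical
  rw [sum_add_distrib, ← sum_image h₁, ← sum_image h₂]
  exact add_le_add (sum_le_sum_of_subset_of_nonneg (subset_univ _) fun a _ _ => hf a)
    (sum_le_sum_of_subset_of_nonneg (subset_univ _) fun b _ _ => hg b)

theorem sum_fst_add_snd_eq_of_injOn [AddCommMonoid M]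
    (h₁ : Set.InjOn Prod.fst (s : Set (α × β))) (h₂ : Set.InjOn Prod.snd (s : Set (α × β)))
    {f : α → M} {g : β → M} (hf : ∀ a, (¬ ∃ b, (a, b) ∈ s) → f a = 0)
    (hg : ∀ b, (¬ ∃ a, (a, b) ∈ s) → g b = 0) :
    ∑ p ∈ s, (f p.1 + g p.2) = ∑ a, f a + ∑ b, g b := by
  classical
  rw [sum_add_distrib, ← sum_image h₁, ← sum_image h₂]
  congr 1
  · exact sum_subset (subset_univ _) fun a _ ha =>
      hf a fun ⟨b, hab⟩ => ha (mem_image_of_mem Prod.fst hab)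
  · exact sum_subset (subset_univ _) fun b _ hb =>
      hg b fun ⟨a, hab⟩ => hb (mem_image_of_mem Prod.snd hab)

end PairSums

def buyerSurplus (Mk : Market B S) (st : MState B S) (b : B) : ℝ := Mk.valB b - st.PB b

def sellerSurplus (Mk : Market B S) (st : MState B S) (s : S) : ℝ := st.PS s - Mk.valS s

def totalSurplus (Mk : Market B S) (st : MState B S) : ℝ :=
  ∑ b, buyerSurplus Mk st b + ∑ s, sellerSurplus Mk st s

theorem SW_le_totalSurplus {Mk : Market B S} {st : MState B S} {Mat : Finset (B × S)}
    (hMat : IsMatching Mk Mat) (hPB : ∀ b, st.PB b ≤ Mk.valB b)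
    (hPS : ∀ s, Mk.valS s ≤ st.PS s) (hE : ∀ p ∈ Mk.E, st.PB p.1 ≤ st.PS p.2) :
    SW Mk Mat ≤ totalSurplus Mk st :=
  calc SW Mk Mat ≤ ∑ p ∈ Mat, (buyerSurplus Mk st p.1 + sellerSurplus Mk st p.2) :=
        sum_le_sum fun p hp => by
          have := hE p (hMat.1 hp)
          simp only [buyerSurplus, sellerSurplus]
          linarith
    _ ≤ totalSurplus Mk st :=
        sum_fst_add_snd_le_of_injOn hMat.2.1 hMat.2.2 (fun b => sub_nonneg.2 (hPB b))
          (fun s => sub_nonneg.2 (hPS s))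

theorem SW_eq_totalSurplus {Mk : Market B S} {st : MState B S} (hM : IsMatching Mk st.M)
    (hB : ∀ b, ¬ BMatched st b → st.PB b = Mk.valB b)
    (hS : ∀ s, ¬ SMatched st s → st.PS s = Mk.valS s)
    (hM_eq : ∀ p ∈ st.M, st.PB p.1 = st.PS p.2) :
    SW Mk st.M = totalSurplus Mk st :=
  calc SW Mk st.M = ∑ p ∈ st.M, (buyerSurplus Mk st p.1 + sellerSurplus Mk st p.2) :=
        sum_congr rfl fun p hp => by
          have := hM_eq p hp
          simp only [buyerSurplus, sellerSurplus]
          linarith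
    _ = totalSurplus Mk st :=
        sum_fst_add_snd_eq_of_injOn hM.2.1 hM.2.2
          (fun b hb => by simp only [buyerSurplus, hB b hb, sub_self])
          (fun s hs => by simp only [sellerSurplus, hS s hs, sub_self])

/-- every stable valid state maximizes social welfare. -/
theorem stable_state_maximizes_social_welfare
    (Mk : Market B S) (st : MState B S)
    (hvalid : ValidState Mk st) (hstable : IsStable Mk st) :
    ∀ Mat' : Finset (B × S), IsMatching Mk Mat' → SW Mk Mat' ≤ SW Mk st.M := by
  intro Mat' hMat'
  obtain ⟨hM, hPB, hPS, -⟩ := hvalid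
  obtain ⟨hE, hB, hS, hM_eq⟩ := hstable
  exact (SW_le_totalSurplus hMat' hPB hPS hE).trans (SW_eq_totalSurplus hM hB hS hM_eq).ge
end

section
/- For any market with n agents and any ε > 0, every ε-stable state realizes an ε-approximate social welfare: if (P, Π) is an ε-stable valid state and Π* maximizes social welfare, then SW(Π) ≥ SW(Π*) − n·ε. -/
open Finset

variable {B S : Type*} [Fintype B] [Fintype S]

/-! Give every buyer the utility `u(B) = val(B) - P(B)` and every seller `v(S) = P(S) - val(S)`;
validity makes both nonnegative. In an ε-stable state the total utility is exactly `SW(Π)`: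
matched partners trade at a common price and unmatched agents price at their valuation.
On the other hand every edge `(B, S)` of any matching has `val(B) - val(S) ≤ u(B) + v(S) + ε`,
so `SW(Π*)` is at most the total utility plus `|Π*| ε ≤ n ε`. -/

section SumOverMatching

variable {ι β : Type*} [Fintype β] {s : Finset ι} {g : ι → β} {f : β → ℝ}

theorem Finset.sum_comp_le_sum_univ (hg : Set.InjOn g s) (hf : ∀ b, 0 ≤ f b) :
    ∑ i ∈ s, f (g i) ≤ ∑ b, f b := by
  classical
  rw [← Finset.sum_image hg]
  exact Finset.sum_le_univ_sum_of_nonneg hf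

theorem Finset.sum_comp_eq_sum_univ (hg : Set.InjOn g s)
    (hf : ∀ b, (∀ i ∈ s, g i ≠ b) → f b = 0) :
    ∑ i ∈ s, f (g i) = ∑ b, f b := by
  classical
  rw [← Finset.sum_image hg]
  refine Finset.sum_subset (Finset.subset_univ _) fun b _ hb => hf b fun i hi hib => ?_
  exact hb (Finset.mem_image.2 ⟨i, hi, hib⟩)

end SumOverMatching

namespace IsMatching

variable {Mk : Market B S} {Mat : Finset (B × S)}

theorem injOn_fst (h : IsMatching Mk Mat) : Set.InjOn Prod.fst (Mat : Set (B × S)) :=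
  fun p hp q hq => h.2.1 p hp q hq

theorem injOn_snd (h : IsMatching Mk Mat) : Set.InjOn Prod.snd (Mat : Set (B × S)) :=
  fun p hp q hq => h.2.2 p hp q hq

theorem card_le_card_buyers (h : IsMatching Mk Mat) : Mat.card ≤ Fintype.card B :=
  Finset.card_le_card_of_injOn Prod.fst (fun _ _ => Finset.mem_univ _) h.injOn_fst

end IsMatching

def buyerUtility (Mk : Market B S) (st : MState B S) (b : B) : ℝ := Mk.valB b - st.PB b

def sellerUtility (Mk : Market B S) (st : MState B S) (s : S) : ℝ := st.PS s - Mk.valS s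

def totalUtility (Mk : Market B S) (st : MState B S) : ℝ :=
  ∑ b, buyerUtility Mk st b + ∑ s, sellerUtility Mk st s

section Welfare

variable {Mk : Market B S} {st : MState B S} {ε : ℝ}

theorem ValidState.buyerUtility_nonneg (h : ValidState Mk st) (b : B) :
    0 ≤ buyerUtility Mk st b :=
  sub_nonneg.2 (h.2.1 b)

theorem ValidState.sellerUtility_nonneg (h : ValidState Mk st) (s : S) :
    0 ≤ sellerUtility Mk st s :=
  sub_nonneg.2 (h.2.2.1 s)

theorem IsEpsStable.sw_eq_totalUtility (hM : IsMatching Mk st.M) (h : IsEpsStable Mk ε st) :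
    SW Mk st.M = totalUtility Mk st := by
  have hbuyers : ∑ p ∈ st.M, buyerUtility Mk st p.1 = ∑ b, buyerUtility Mk st b :=
    Finset.sum_comp_eq_sum_univ hM.injOn_fst fun b hb => by
      rw [buyerUtility, h.2.1 b fun ⟨s, hs⟩ => hb _ hs rfl, sub_self]
  have hsellers : ∑ p ∈ st.M, sellerUtility Mk st p.2 = ∑ s, sellerUtility Mk st s :=
    Finset.sum_comp_eq_sum_univ hM.injOn_snd fun s hs => by
      rw [sellerUtility, h.2.2.1 s fun ⟨b, hb⟩ => hs _ hb rfl, sub_self]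
  rw [totalUtility, ← hbuyers, ← hsellers, ← Finset.sum_add_distrib, SW]
  refine Finset.sum_congr rfl fun p hp => ?_
  simp only [buyerUtility, sellerUtility, h.2.2.2 p hp]
  ring

theorem IsEpsStable.sw_le_totalUtility_add (hvalid : ValidState Mk st)
    (h : IsEpsStable Mk ε st) {Mat : Finset (B × S)} (hMat : IsMatching Mk Mat) :
    SW Mk Mat ≤ totalUtility Mk st + Mat.card * ε := by
  have hedge : ∀ p ∈ Mat, Mk.valB p.1 - Mk.valS p.2
      ≤ buyerUtility Mk st p.1 + sellerUtility Mk st p.2 + ε := fun p hp => by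
    have := h.1 p (hMat.1 hp)
    simp only [buyerUtility, sellerUtility]
    linarith
  calc SW Mk Mat
      ≤ ∑ p ∈ Mat, (buyerUtility Mk st p.1 + sellerUtility Mk st p.2 + ε) :=
        Finset.sum_le_sum hedge
    _ = ∑ p ∈ Mat, buyerUtility Mk st p.1 + ∑ p ∈ Mat, sellerUtility Mk st p.2
          + Mat.card * ε := by
        rw [Finset.sum_add_distrib, Finset.sum_add_distrib, Finset.sum_const, nsmul_eq_mul]
    _ ≤ totalUtility Mk st + Mat.card * ε := by
        rw [totalUtility]
        gcongr ?_ + ?_ + _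
        exacts [Finset.sum_comp_le_sum_univ hMat.injOn_fst hvalid.buyerUtility_nonneg,
          Finset.sum_comp_le_sum_univ hMat.injOn_snd hvalid.sellerUtility_nonneg]

end Welfare

theorem eps_stable_approx_social_welfare_general
    (Mk : Market B S) (ε : ℝ) (hε : 0 < ε) (st : MState B S)
    (hvalid : ValidState Mk st) (hstable : IsEpsStable Mk ε st)
    (Mstar : Finset (B × S)) (hMstar : IsMatching Mk Mstar) :
    SW Mk Mstar - (Fintype.card B + Fintype.card S : ℝ) * ε ≤ SW Mk st.M := by
  have hcard : (Mstar.card : ℝ) ≤ Fintype.card B + Fintype.card S := by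
    exact_mod_cast hMstar.card_le_card_buyers.trans (Nat.le_add_right _ _)
  have hwelfare := hstable.sw_le_totalUtility_add hvalid hMstar
  rw [hstable.sw_eq_totalUtility hvalid.1]
  linarith [mul_le_mul_of_nonneg_right hcard hε.le]

/-- an ε-stable state realizes ε-approximate social welfare. -/
theorem eps_stable_approx_social_welfare
    (Mk : Market B S) (ε : ℝ) (hε : 0 < ε) (st : MState B S)
    (hvalid : ValidState Mk st) (hstable : IsEpsStable Mk ε st)
    (Mstar : Finset (B × S)) (hMstar : IsMatching Mk Mstar)
    (hmax : ∀ Mat' : Finset (B × S), IsMatching Mk Mat' → SW Mk Mat' ≤ SW Mk Mstar) :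
    SW Mk Mstar - (Fintype.card B + Fintype.card S : ℝ) * ε ≤ SW Mk st.M :=
  eps_stable_approx_social_welfare_general Mk ε hε st hvalid hstable Mstar hMstar
end

section
/- Let δ = min{ |val(Z₁) − val(Z₂)| : Z₁, Z₂ agents with val(Z₁) ≠ val(Z₂) }. Then for any ε with 0 ≤ ε < δ/n, every ε-stable state of the market maximizes social welfare. -/
open Finset

variable {B S : Type*} [Fintype B] [Fintype S]

/-- Valuation of an agent (buyer or seller). -/
def agentVal (Mk : Market B S) : B ⊕ S → ℝ := Sum.elim Mk.valB Mk.valS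

/-- δ: the minimum nonzero difference between valuations of two agents. -/
noncomputable def DeltaVal (Mk : Market B S) : ℝ :=
  sInf {d : ℝ | ∃ z₁ z₂ : B ⊕ S, agentVal Mk z₁ ≠ agentVal Mk z₂ ∧
    d = |agentVal Mk z₁ - agentVal Mk z₂|}

/-!
Once the agents matched by both matchings cancel, `SW N - SW M` is the sum of the valuations of
the *gain agents* (buyers matched only by `N`, sellers matched only by `M`) minus that of the
*loss agents* (the same with `N` and `M` exchanged). At a valid ε-stable state prices bound
valuations from above on gain agents and from below on loss agents.

For a price level `θ`, the agents priced at least `θ` form a set closed along `M`-edges from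
seller to buyer, and along `N`-edges from buyer to seller unless `θ` falls in the window
`(PS s, PB b]` of some `N`-edge; such a set contains at most as many gain as loss agents. The
windows have total length at most `n ε < δ`, so every interval `(t - δ, t]` contains an admissible
`θ`, and since distinct valuations differ by at least `δ` this yields
`#{gain agents with val ≥ t} ≤ #{loss agents with val ≥ t}` for every `t`. A majorization
argument turns these counts into `Σ_gain val ≤ Σ_loss val`.
-/

theorem exists_mem_Ioc_forall_notMem_Ioc {ι : Type*} (I : Finset ι) (a c : ι → ℝ) (t : ℝ)
    {δ : ℝ} (h : ∑ i ∈ I, max (c i - a i) 0 < δ) :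
    ∃ θ ∈ Set.Ioc (t - δ) t, ∀ i ∈ I, θ ∉ Set.Ioc (a i) (c i) := by
  by_contra! hcover
  have := calc ENNReal.ofReal δ
      = MeasureTheory.volume (Set.Ioc (t - δ) t) := by rw [Real.volume_Ioc, sub_sub_cancel]
    _ ≤ MeasureTheory.volume (⋃ i ∈ I, Set.Ioc (a i) (c i)) :=
        MeasureTheory.measure_mono fun θ hθ =>
          let ⟨_, hi, hθi⟩ := hcover θ hθ
          Set.mem_iUnion₂_of_mem hi hθi
    _ ≤ ∑ i ∈ I, MeasureTheory.volume (Set.Ioc (a i) (c i)) :=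
        MeasureTheory.measure_biUnion_finset_le I _
    _ = ENNReal.ofReal (∑ i ∈ I, max (c i - a i) 0) := by
        rw [ENNReal.ofReal_sum_of_nonneg fun i _ => le_max_right _ _]
        simp [Real.volume_Ioc, ENNReal.ofReal_max]
  rw [ENNReal.ofReal_le_ofReal_iff (sum_nonneg fun i _ => le_max_right _ _)] at this
  linarith

theorem Finset.sum_le_sum_of_card_filter_le {ι M : Type*} [DecidableEq ι] [AddCommMonoid M]
    [LinearOrder M] [IsOrderedAddMonoid M] (f : ι → M) {P Q : Finset ι} (hcard : #Q ≤ #P)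
    (h : ∀ x ∈ P, #{y ∈ P | f x ≤ f y} ≤ #{y ∈ Q | f x ≤ f y}) :
    ∑ x ∈ P, f x ≤ ∑ x ∈ Q, f x := by
  induction P using Finset.induction_on_max_value f generalizing Q with
  | empty => simp_all
  | insert p P hpP hmax ih =>
    obtain ⟨q, hqQ, hpq⟩ : ∃ q ∈ Q, f p ≤ f q := by
      have := h p (mem_insert_self p P)
      rw [filter_insert, if_pos le_rfl, card_insert_of_notMem (by simp [hpP])] at this
      obtain ⟨q, hq⟩ := card_pos.1 (Nat.succ_pos _ |>.trans_le this)
      exact ⟨q, (mem_filter.1 hq).1, (mem_filter.1 hq).2⟩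
    rw [sum_insert hpP, ← add_sum_erase Q f hqQ]
    refine add_le_add hpq (ih ?_ fun x hx => ?_)
    · rw [card_erase_of_mem hqQ, card_insert_of_notMem hpP] at *; omega
    · have hx' := h x (mem_insert_of_mem hx)
      rw [filter_insert, if_pos (hmax x hx), card_insert_of_notMem (by simp [hpP])] at hx'
      rw [filter_erase, card_erase_of_mem (by simp [hqQ, (hmax x hx).trans hpq])]
      omega

section Pairing

variable {α β : Type*}

def IsPairing (N : Finset (α × β)) : Prop :=
  Set.InjOn Prod.fst (N : Set (α × β)) ∧ Set.InjOn Prod.snd (N : Set (α × β))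

variable [DecidableEq α] [DecidableEq β]

def gainAgents (N M : Finset (α × β)) : Finset (α ⊕ β) :=
  (N.image Prod.fst \ M.image Prod.fst).disjSum (M.image Prod.snd \ N.image Prod.snd)

theorem sum_edges_sub_sum_edges {G : Type*} [AddCommGroup G] {N M : Finset (α × β)}
    (hN : IsPairing N) (hM : IsPairing M) (g : α ⊕ β → G) :
    ∑ e ∈ N, (g (.inl e.1) - g (.inr e.2)) - ∑ e ∈ M, (g (.inl e.1) - g (.inr e.2)) =
      ∑ z ∈ gainAgents N M, g z - ∑ z ∈ gainAgents M N, g z := by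
  have h₁ := sum_sdiff_sub_sum_sdiff (s₁ := M.image Prod.fst) (s₂ := N.image Prod.fst)
    (f := fun b => g (.inl b))
  have h₂ := sum_sdiff_sub_sum_sdiff (s₁ := N.image Prod.snd) (s₂ := M.image Prod.snd)
    (f := fun s => g (.inr s))
  rw [sum_image hN.1, sum_image hM.1] at h₁
  rw [sum_image hN.2, sum_image hM.2] at h₂
  simp only [gainAgents, sum_disjSum, sum_sub_distrib]
  rw [← sub_eq_zero]
  linear_combination (norm := abel) - h₁ - h₂

theorem card_filter_gainAgents_le {N M : Finset (α × β)} (hN : IsPairing N) (hM : IsPairing M)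
    (H : α ⊕ β → Prop) [DecidablePred H]
    (hNH : ∀ e ∈ N, H (.inl e.1) → H (.inr e.2)) (hMH : ∀ e ∈ M, H (.inr e.2) → H (.inl e.1)) :
    #{z ∈ gainAgents N M | H z} ≤ #{z ∈ gainAgents M N | H z} := by
  have key := sum_edges_sub_sum_edges hN hM fun z => if H z then (1 : ℤ) else 0
  have hN' : ∑ e ∈ N, ((if H (.inl e.1) then (1 : ℤ) else 0) - if H (.inr e.2) then 1 else 0) ≤ 0 :=
    sum_nonpos fun e he => by have := hNH e he; split_ifs <;> simp_all
  have hM' : 0 ≤ ∑ e ∈ M, ((if H (.inl e.1) then (1 : ℤ) else 0) - if H (.inr e.2) then 1 else 0) :=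
    sum_nonneg fun e he => by have := hMH e he; split_ifs <;> simp_all
  simp only [sum_boole] at key
  omega

theorem sum_edges_le_of_slack_lt {N M : Finset (α × β)} (hN : IsPairing N) (hM : IsPairing M)
    {v p : α ⊕ β → ℝ} {δ : ℝ}
    (hgain : ∀ z ∈ gainAgents N M, v z ≤ p z) (hloss : ∀ z ∈ gainAgents M N, p z ≤ v z)
    (hMp : ∀ e ∈ M, p (.inr e.2) ≤ p (.inl e.1))
    (hslack : ∑ e ∈ N, max (p (.inl e.1) - p (.inr e.2)) 0 < δ)
    (hgap : ∀ z₁ z₂, v z₁ - v z₂ < δ → v z₁ ≤ v z₂) :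
    ∑ e ∈ N, (v (.inl e.1) - v (.inr e.2)) ≤ ∑ e ∈ M, (v (.inl e.1) - v (.inr e.2)) := by
  have hcard : #(gainAgents M N) ≤ #(gainAgents N M) := by
    have := sum_edges_sub_sum_edges hN hM fun _ => (1 : ℤ)
    simp only [sub_self, sum_const_zero, sum_const, nsmul_eq_mul, mul_one] at this
    omega
  have hsum := sum_le_sum_of_card_filter_le v hcard fun z _ => by
    obtain ⟨θ, ⟨hθlo, hθhi⟩, hθ⟩ := exists_mem_Ioc_forall_notMem_Ioc N
      (fun e => p (.inr e.2)) (fun e => p (.inl e.1)) (v z) hslack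
    calc #{y ∈ gainAgents N M | v z ≤ v y}
        ≤ #{y ∈ gainAgents N M | θ ≤ p y} :=
          card_le_card fun y hy => by
            simp only [mem_filter] at hy ⊢
            exact ⟨hy.1, by linarith [hgain y hy.1]⟩
      _ ≤ #{y ∈ gainAgents M N | θ ≤ p y} :=
          card_filter_gainAgents_le hN hM _
            (fun e he h => not_lt.1 fun h' => hθ e he ⟨h', h⟩) fun e he h => h.trans (hMp e he)
      _ ≤ #{y ∈ gainAgents M N | v z ≤ v y} :=
          card_le_card fun y hy => by
            simp only [mem_filter] at hy ⊢
            exact ⟨hy.1, hgap _ _ (by linarith [hloss y hy.1])⟩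
  linarith [sum_edges_sub_sum_edges hN hM v]

end Pairing

theorem IsMatching.isPairing {Mk : Market B S} {N : Finset (B × S)} (h : IsMatching Mk N) :
    IsPairing N :=
  ⟨fun x hx y hy => h.2.1 x hx y hy, fun x hx y hy => h.2.2 x hx y hy⟩

theorem agentVal_le_of_sub_lt_deltaVal (Mk : Market B S) {z₁ z₂ : B ⊕ S}
    (h : agentVal Mk z₁ - agentVal Mk z₂ < DeltaVal Mk) : agentVal Mk z₁ ≤ agentVal Mk z₂ := by
  by_contra! hlt
  have : DeltaVal Mk ≤ |agentVal Mk z₁ - agentVal Mk z₂| :=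
    csInf_le ⟨0, by rintro _ ⟨_, _, _, rfl⟩; exact abs_nonneg _⟩ ⟨z₁, z₂, hlt.ne', rfl⟩
  rw [abs_of_pos (sub_pos.2 hlt)] at this
  linarith

section State
variable [DecidableEq B] [DecidableEq S] {Mk : Market B S} {ε : ℝ} {st : MState B S}

theorem agentVal_le_price_of_mem_gainAgents (hvalid : ValidState Mk st)
    (hstable : IsEpsStable Mk ε st) {N : Finset (B × S)} :
    ∀ z ∈ gainAgents N st.M, agentVal Mk z ≤ Sum.elim st.PB st.PS z := by
  rintro (b | s) hz <;> simp only [gainAgents, inl_mem_disjSum, inr_mem_disjSum, mem_sdiff] at hz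
  · exact (hstable.2.1 b fun ⟨s, hs⟩ => hz.2 (mem_image_of_mem Prod.fst hs)).ge
  · exact hvalid.2.2.1 s

theorem price_le_agentVal_of_mem_gainAgents (hvalid : ValidState Mk st)
    (hstable : IsEpsStable Mk ε st) {N : Finset (B × S)} :
    ∀ z ∈ gainAgents st.M N, Sum.elim st.PB st.PS z ≤ agentVal Mk z := by
  rintro (b | s) hz <;> simp only [gainAgents, inl_mem_disjSum, inr_mem_disjSum, mem_sdiff] at hz
  · exact hvalid.2.1 b
  · exact (hstable.2.2.1 s fun ⟨b, hb⟩ => hz.2 (mem_image_of_mem Prod.snd hb)).le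

end State

theorem eps_stable_maximizes_social_welfare_general
    (Mk : Market B S)
    (ε : ℝ) (hε0 : 0 ≤ ε)
    (hεδ : ε < DeltaVal Mk / (Fintype.card B + Fintype.card S : ℝ))
    (st : MState B S) (hvalid : ValidState Mk st) (hstable : IsEpsStable Mk ε st) :
    ∀ Mat' : Finset (B × S), IsMatching Mk Mat' → SW Mk Mat' ≤ SW Mk st.M := by
  classical
  intro N hN
  have hn : (0 : ℝ) < Fintype.card B + Fintype.card S :=
    lt_of_le_of_ne (by positivity) fun h => by rw [← h, div_zero] at hεδ; linarith
  have hslack : ∑ e ∈ N, max (st.PB e.1 - st.PS e.2) 0 < DeltaVal Mk := calc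
    _ ≤ #N • ε := sum_le_card_nsmul _ _ _ fun e he => max_le (hstable.1 e (hN.1 he)) hε0
    _ ≤ (Fintype.card B + Fintype.card S : ℝ) * ε := by
        rw [nsmul_eq_mul]
        gcongr
        exact_mod_cast (card_le_card_of_injOn Prod.fst (fun _ _ => mem_univ _)
          hN.isPairing.1).trans (Nat.le_add_right _ _)
    _ < DeltaVal Mk := by rwa [lt_div_iff₀ hn, mul_comm] at hεδ
  exact sum_edges_le_of_slack_lt hN.isPairing hvalid.1.isPairing
    (agentVal_le_price_of_mem_gainAgents hvalid hstable)
    (price_le_agentVal_of_mem_gainAgents hvalid hstable) hvalid.2.2.2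
    hslack fun _ _ => agentVal_le_of_sub_lt_deltaVal Mk

/-- for `0 ≤ ε < δ/n`, every ε-stable state maximizes social welfare. -/
theorem eps_stable_maximizes_social_welfare
    (Mk : Market B S)
    (hex : ∃ z₁ z₂ : B ⊕ S, agentVal Mk z₁ ≠ agentVal Mk z₂)
    (ε : ℝ) (hε0 : 0 ≤ ε)
    (hεδ : ε < DeltaVal Mk / (Fintype.card B + Fintype.card S : ℝ))
    (st : MState B S) (hvalid : ValidState Mk st) (hstable : IsEpsStable Mk ε st) :
    ∀ Mat' : Finset (B × S), IsMatching Mk Mat' → SW Mk Mat' ≤ SW Mk st.M :=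
  eps_stable_maximizes_social_welfare_general Mk ε hε0 hεδ st hvalid hstable
end

section
/- If (x, y) is a pair of optimal primal and dual solutions to the bipartite matching LP with weights w(B,S) = val(B) − val(S), where x = x^Π is the characteristic vector of a matching Π and y = y^P arises from a valid price function P, then the state (P, Π) is stable; in particular Σ_{(B,S)∈Π} (P(S) − P(B)) + Σ_{Z ∉ Π} y^P(Z) = 0, which forces P(B) = P(S) on every matched pair and P(Z) = val(Z) for every unmatched agent. -/
open Finset

variable {B S : Type*} [Fintype B] [Fintype S]

/-!
Write `y = y^P`. Dual feasibility of `y` and validity of `P` make every term of the displayed sum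
nonnegative, and the sum equals `Σ y − SW(Π)`, so everything reduces to `Σ y ≤ SW(Π)`. Since `Π` is
primal optimal, it suffices to find some matching whose weight is `Σ y`, i.e. integral strong
duality at the optimal dual `y`. In the subgraph of tight edges (`w = y(B) + y(S)`), the vertices
with `y > 0` on either side satisfy Hall's condition: if a set `A` of them had fewer tight
neighbours, lowering `y` on `A` and raising it on the tight neighbourhood by a small `δ` would
give a cheaper cover. Hall's theorem yields a tight matching saturating the positive buyers and
one saturating the positive sellers, and an exchange argument merges them into one tight matching
saturating both; its weight is exactly `Σ y`.
-/

theorem sum_comp_eq_sum_univ_of_injOn {α γ M : Type*} [Fintype α] [DecidableEq α] [AddCommMonoid M]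
    {s : Finset γ} {π : γ → α} (hπ : Set.InjOn π s) {f : α → M}
    (hf : ∀ a, f a ≠ 0 → a ∈ s.image π) :
    ∑ p ∈ s, f (π p) = ∑ a, f a := by
  rw [← sum_image hπ]
  exact sum_subset (subset_univ _) fun a _ ha => by_contra fun hne => ha (hf a hne)

section Matching

variable {α β : Type*}

def IsBipartiteMatching (M : Finset (α × β)) : Prop :=
  Set.InjOn Prod.fst (M : Set (α × β)) ∧ Set.InjOn Prod.snd (M : Set (α × β))

theorem IsBipartiteMatching.map_prodComm {M : Finset (α × β)} (hM : IsBipartiteMatching M) :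
    IsBipartiteMatching (M.map (Equiv.prodComm α β).toEmbedding) := by
  simp only [IsBipartiteMatching, coe_map]
  constructor <;> rintro _ ⟨p, hp, rfl⟩ _ ⟨q, hq, rfl⟩ h
  · rw [hM.2 hp hq h]
  · rw [hM.1 hp hq h]

theorem IsBipartiteMatching.insert_filter_fst_ne [DecidableEq α] [DecidableEq β]
    {M : Finset (α × β)} (hM : IsBipartiteMatching M) (a : α) {b : β} (hb : ∀ a', (a', b) ∉ M) :
    IsBipartiteMatching (insert (a, b) {p ∈ M | p.1 ≠ a}) := by
  have hab : (a, b) ∉ ({p ∈ M | p.1 ≠ a} : Set (α × β)) := by simp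
  simp only [IsBipartiteMatching, coe_insert, coe_filter, Set.injOn_insert hab]
  refine ⟨⟨hM.1.mono fun p hp => hp.1, ?_⟩, ⟨hM.2.mono fun p hp => hp.1, ?_⟩⟩
  · rintro ⟨p, ⟨-, hpa⟩, hp⟩
    exact hpa hp
  · rintro ⟨p, ⟨hpM, -⟩, rfl⟩
    exact hb p.1 hpM

variable [Fintype α] [Fintype β] [DecidableEq α] [DecidableEq β]

theorem exists_matching_covering_of_hall (T : Finset (α × β)) (X : Finset α)
    (hall : ∀ A ⊆ X, #A ≤ #{b | ∃ a ∈ A, (a, b) ∈ T}) :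
    ∃ M ⊆ T, IsBipartiteMatching M ∧ ∀ a ∈ X, ∃ b, (a, b) ∈ M := by
  obtain ⟨f, hf, hfT⟩ := (Fintype.all_card_le_filter_rel_iff_exists_injective
      (fun (a : X) b => (a.1, b) ∈ T)).1 fun A => by
    have := hall (A.map (Function.Embedding.subtype _)) fun _ ha => property_of_mem_map_subtype A ha
    convert this using 2
    · simp
    · ext b; simp
  refine ⟨univ.image fun a : X => (a.1, f a), ?_, ⟨?_, ?_⟩, fun a ha => ⟨f ⟨a, ha⟩, ?_⟩⟩
  · rintro _ hp
    obtain ⟨a, -, rfl⟩ := mem_image.1 hp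
    exact hfT a
  · simp only [coe_image, coe_univ, Set.image_univ]
    rintro _ ⟨a, rfl⟩ _ ⟨a', rfl⟩ h
    rw [Subtype.ext h]
  · simp only [coe_image, coe_univ, Set.image_univ]
    rintro _ ⟨a, rfl⟩ _ ⟨a', rfl⟩ h
    rw [hf h]
  · exact mem_image_of_mem (fun a : X => (a.1, f a)) (mem_univ ⟨a, ha⟩)

/-- Induction on `#(M₂ \ M₁)`: an edge `(a, b) ∈ M₂` at an uncovered `b ∈ Y` replaces the edge of
`M₁` at `a`, which lies outside `M₂`. -/
theorem exists_matching_covering_fst_snd {T M₁ M₂ : Finset (α × β)} {X : Set α} {Y : Set β}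
    (hM₁T : M₁ ⊆ T) (hM₁ : IsBipartiteMatching M₁) (hX : ∀ a ∈ X, ∃ b, (a, b) ∈ M₁)
    (hM₂T : M₂ ⊆ T) (hM₂ : Set.InjOn Prod.fst (M₂ : Set (α × β)))
    (hY : ∀ b ∈ Y, ∃ a, (a, b) ∈ M₂) :
    ∃ M ⊆ T, IsBipartiteMatching M ∧ (∀ a ∈ X, ∃ b, (a, b) ∈ M) ∧ ∀ b ∈ Y, ∃ a, (a, b) ∈ M := by
  induction hn : #(M₂ \ M₁) using Nat.strong_induction_on generalizing M₁ with
  | _ n ih =>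
  by_cases hcov : ∀ b ∈ Y, ∃ a, (a, b) ∈ M₁
  · exact ⟨M₁, hM₁T, hM₁, hX, hcov⟩
  push Not at hcov
  obtain ⟨b, hbY, hb⟩ := hcov
  obtain ⟨a, hab⟩ := hY b hbY
  set M := insert (a, b) {p ∈ M₁ | p.1 ≠ a}
  have hsub : M₂ \ M ⊂ M₂ \ M₁ := by
    refine ⟨fun q hq => ?_, fun hsub => ?_⟩
    · simp only [mem_sdiff] at hq ⊢
      refine ⟨hq.1, fun hqM₁ => hq.2 ?_⟩
      by_cases hqa : q.1 = a
      · rw [hM₂ hq.1 hab hqa]; exact mem_insert_self _ _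
      · exact mem_insert_of_mem (mem_filter.2 ⟨hqM₁, hqa⟩)
    · exact (mem_sdiff.1 (hsub (mem_sdiff.2 ⟨hab, hb a⟩))).2 (mem_insert_self _ _)
  refine ih _ (hn ▸ card_lt_card hsub) ?_ (hM₁.insert_filter_fst_ne a hb) ?_ rfl
  · exact insert_subset (hM₂T hab) ((filter_subset _ _).trans hM₁T)
  · intro a' ha'
    obtain ⟨b', hb'⟩ := hX a' ha'
    by_cases h : a' = a
    · exact ⟨b, h ▸ mem_insert_self _ _⟩
    · exact ⟨b', mem_insert_of_mem (mem_filter.2 ⟨hb', h⟩)⟩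

end Matching

section WeightCover

variable {α β : Type*}

def IsWeightCover (E : Finset (α × β)) (w : α × β → ℝ) (u : α → ℝ) (v : β → ℝ) : Prop :=
  (∀ a, 0 ≤ u a) ∧ (∀ b, 0 ≤ v b) ∧ ∀ p ∈ E, w p ≤ u p.1 + v p.2

def IsMinWeightCover [Fintype α] [Fintype β] (E : Finset (α × β)) (w : α × β → ℝ) (u : α → ℝ)
    (v : β → ℝ) : Prop :=
  IsWeightCover E w u v ∧
    ∀ u' v', IsWeightCover E w u' v' → ∑ a, u a + ∑ b, v b ≤ ∑ a, u' a + ∑ b, v' b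

noncomputable def tightEdges (E : Finset (α × β)) (w : α × β → ℝ) (u : α → ℝ) (v : β → ℝ) :
    Finset (α × β) :=
  {p ∈ E | w p = u p.1 + v p.2}

variable {E : Finset (α × β)} {w : α × β → ℝ} {u : α → ℝ} {v : β → ℝ}

theorem IsWeightCover.shift [DecidableEq α] [DecidableEq β] (h : IsWeightCover E w u v)
    {A : Finset α} {δ : ℝ} (hδ : 0 ≤ δ) (hδu : ∀ a ∈ A, δ ≤ u a)
    (hδE : ∀ p ∈ E, p.1 ∈ A → p ∉ tightEdges E w u v → δ ≤ u p.1 + v p.2 - w p) :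
    IsWeightCover E w (fun a => u a - if a ∈ A then δ else 0)
      (fun b => v b + if ∃ a ∈ A, (a, b) ∈ tightEdges E w u v then δ else 0) := by
  obtain ⟨hu, hv, hE⟩ := h
  refine ⟨fun a => ?_, fun b => ?_, fun p hp => ?_⟩
  · dsimp only
    split_ifs with ha
    · linarith [hδu a ha]
    · simpa using hu a
  · dsimp only
    split_ifs <;> linarith [hv b]
  · have := hE p hp
    by_cases hpA : p.1 ∈ A
    · by_cases hpT : p ∈ tightEdges E w u v
      · have hnbr : ∃ a ∈ A, (a, p.2) ∈ tightEdges E w u v := ⟨p.1, hpA, hpT⟩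
        simp only [hpA, hnbr, if_true]
        linarith
      · have := hδE p hp hpA hpT
        simp only [hpA, if_true]
        split_ifs <;> linarith
    · simp only [hpA, if_false]
      split_ifs <;> linarith

theorem isWeightCover_map_prodComm_iff :
    IsWeightCover (E.map (Equiv.prodComm α β).toEmbedding) (w ∘ Prod.swap) v u ↔
      IsWeightCover E w u v := by
  simp [IsWeightCover, add_comm]
  tauto

theorem tightEdges_map_prodComm :
    tightEdges (E.map (Equiv.prodComm α β).toEmbedding) (w ∘ Prod.swap) v u =
      (tightEdges E w u v).map (Equiv.prodComm α β).toEmbedding := by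
  ext ⟨b, a⟩
  simp [tightEdges, add_comm]

variable [Fintype α] [Fintype β]

theorem IsMinWeightCover.map_prodComm (h : IsMinWeightCover E w u v) :
    IsMinWeightCover (E.map (Equiv.prodComm α β).toEmbedding) (w ∘ Prod.swap) v u := by
  refine ⟨isWeightCover_map_prodComm_iff.2 h.1, fun v' u' hc => ?_⟩
  have := h.2 u' v' (isWeightCover_map_prodComm_iff.1 hc)
  linarith

variable [DecidableEq α] [DecidableEq β]

open Filter Topology in
/-- Otherwise lowering `u` on `A` and raising `v` on the tight neighbourhood of `A` by a small
`δ > 0` would give a cheaper cover. -/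
theorem IsMinWeightCover.card_le_card_tight_nbhd
    (h : IsMinWeightCover E w u v) {A : Finset α} (hA : ∀ a ∈ A, 0 < u a) :
    #A ≤ #{b | ∃ a ∈ A, (a, b) ∈ tightEdges E w u v} := by
  by_contra! hlt
  set T := tightEdges E w u v
  set slack : Finset (α × β) := {p ∈ E | p.1 ∈ A ∧ p ∉ T}
  have hslack : ∀ p ∈ slack, 0 < u p.1 + v p.2 - w p := by
    intro p hp
    simp only [slack, T, tightEdges, mem_filter] at hp
    linarith [lt_of_le_of_ne (h.1.2.2 p hp.1) (by tauto)]
  obtain ⟨δ, ⟨hδu, hδslack⟩, hδ⟩ : ∃ δ : ℝ, ((∀ a ∈ A, δ ≤ u a) ∧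
      ∀ p ∈ slack, δ ≤ u p.1 + v p.2 - w p) ∧ 0 < δ := by
    refine (Eventually.and ?_ ?_ |>.and self_mem_nhdsWithin).exists (f := 𝓝[>] (0 : ℝ))
    · exact (eventually_all_finset _).2 fun a ha =>
        (eventually_le_nhds (hA a ha)).filter_mono nhdsWithin_le_nhds
    · exact (eventually_all_finset _).2 fun p hp =>
        (eventually_le_nhds (hslack p hp)).filter_mono nhdsWithin_le_nhds
  have hcover := h.1.shift hδ.le hδu fun p hp hpA hpT => hδslack p (mem_filter.2 ⟨hp, hpA, hpT⟩)
  have hsum : ∑ a, (u a - if a ∈ A then δ else 0) +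
      ∑ b, (v b + if ∃ a ∈ A, (a, b) ∈ T then δ else 0) =
      ∑ a, u a + ∑ b, v b - (#A - #{b | ∃ a ∈ A, (a, b) ∈ T}) * δ := by
    simp only [sum_sub_distrib, sum_add_distrib, sum_ite_mem, sum_ite, sum_const, univ_inter,
      nsmul_eq_mul]
    ring
  have hcard : (#{b | ∃ a ∈ A, (a, b) ∈ T} : ℝ) + 1 ≤ #A := by exact_mod_cast hlt
  nlinarith [h.2 _ _ hcover]

theorem IsMinWeightCover.exists_tight_matching_covering_fst
    (h : IsMinWeightCover E w u v) :
    ∃ M ⊆ tightEdges E w u v, IsBipartiteMatching M ∧ ∀ a, 0 < u a → ∃ b, (a, b) ∈ M := by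
  obtain ⟨M, hMT, hM, hcov⟩ := exists_matching_covering_of_hall (tightEdges E w u v)
    {a | 0 < u a} fun A hA => h.card_le_card_tight_nbhd fun a ha => by simpa using hA ha
  exact ⟨M, hMT, hM, fun a ha => hcov a (by simpa using ha)⟩

theorem IsMinWeightCover.exists_tight_matching_covering_snd
    (h : IsMinWeightCover E w u v) :
    ∃ M ⊆ tightEdges E w u v, IsBipartiteMatching M ∧ ∀ b, 0 < v b → ∃ a, (a, b) ∈ M := by
  obtain ⟨M, hMT, hM, hcov⟩ := h.map_prodComm.exists_tight_matching_covering_fst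
  rw [tightEdges_map_prodComm] at hMT
  refine ⟨M.map (Equiv.prodComm β α).toEmbedding, ?_, hM.map_prodComm, fun b hb => ?_⟩
  · intro p hp
    rw [mem_map_equiv] at hp
    simpa using hMT hp
  · obtain ⟨a, ha⟩ := hcov b hb
    exact ⟨a, by simpa using ha⟩

theorem IsMinWeightCover.exists_tight_matching_covering_pos
    (h : IsMinWeightCover E w u v) :
    ∃ M ⊆ tightEdges E w u v, IsBipartiteMatching M ∧ (∀ a, 0 < u a → ∃ b, (a, b) ∈ M) ∧
      ∀ b, 0 < v b → ∃ a, (a, b) ∈ M := by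
  obtain ⟨M₁, hM₁T, hM₁, hX⟩ := h.exists_tight_matching_covering_fst
  obtain ⟨M₂, hM₂T, hM₂, hY⟩ := h.exists_tight_matching_covering_snd
  exact exists_matching_covering_fst_snd (X := {a | 0 < u a}) (Y := {b | 0 < v b})
    hM₁T hM₁ hX hM₂T hM₂.1 hY

theorem IsMinWeightCover.exists_matching_sum_eq
    (h : IsMinWeightCover E w u v) :
    ∃ M ⊆ E, IsBipartiteMatching M ∧ ∑ p ∈ M, w p = ∑ a, u a + ∑ b, v b := by
  obtain ⟨M, hMT, hM, hX, hY⟩ := h.exists_tight_matching_covering_pos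
  refine ⟨M, hMT.trans (filter_subset _ _), hM, ?_⟩
  have hu : ∑ p ∈ M, u p.1 = ∑ a, u a := sum_comp_eq_sum_univ_of_injOn hM.1 fun a ha => by
    obtain ⟨b, hab⟩ := hX a ((h.1.1 a).lt_of_ne' ha)
    exact mem_image_of_mem Prod.fst hab
  have hv : ∑ p ∈ M, v p.2 = ∑ b, v b := sum_comp_eq_sum_univ_of_injOn hM.2 fun b hb => by
    obtain ⟨a, hab⟩ := hY b ((h.1.2.1 b).lt_of_ne' hb)
    exact mem_image_of_mem Prod.snd hab
  rw [← hu, ← hv, ← sum_add_distrib]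
  exact sum_congr rfl fun p hp => (mem_filter.1 (hMT hp)).2

end WeightCover

section Market

variable [DecidableEq B] [DecidableEq S] {Mk : Market B S}

theorem primalFeasible_charVec {M : Finset (B × S)} (hM : IsMatching Mk M) :
    PrimalFeasible Mk (charVec M) := by
  obtain ⟨hME, hfst, hsnd⟩ := hM
  refine ⟨fun p => ?_, fun p hp => if_neg fun h => hp (hME h), fun b => ?_, fun s => ?_⟩
  · unfold charVec; split_ifs <;> norm_num
  · simp only [charVec, sum_boole, Nat.cast_le_one]
    exact card_le_one.2 fun s hs s' hs' =>
      congrArg Prod.snd (hfst (b, s) (by simpa using hs) (b, s') (by simpa using hs') rfl)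
  · simp only [charVec, sum_boole, Nat.cast_le_one]
    exact card_le_one.2 fun b hb b' hb' =>
      congrArg Prod.fst (hsnd (b, s) (by simpa using hb) (b', s) (by simpa using hb') rfl)

theorem primalValue_charVec_s4 {M : Finset (B × S)} (hME : M ⊆ Mk.E) :
    PrimalValue Mk (charVec M) = SW Mk M := by
  simp only [PrimalValue, SW, charVec, edgeWeight, mul_ite, mul_one, mul_zero, sum_ite_mem,
    inter_eq_right.2 hME]

theorem dualValue_le_SW {M : Finset (B × S)} {yB : B → ℝ} {yS : S → ℝ}
    (hp : PrimalOptimal Mk (charVec M)) (hME : M ⊆ Mk.E) (hd : DualOptimal Mk yB yS) :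
    DualValue yB yS ≤ SW Mk M := by
  have hcover : IsMinWeightCover Mk.E (edgeWeight Mk) yB yS := hd
  obtain ⟨M', hM'E, hM', hsum⟩ := hcover.exists_matching_sum_eq
  have := hp.2 _ (primalFeasible_charVec ⟨hM'E, hM'⟩)
  rw [primalValue_charVec_s4 hM'E, primalValue_charVec_s4 hME] at this
  exact hsum.symm.le.trans this

end Market

open scoped Classical in
theorem slack_sum_eq_dualValue_sub_SW (Mk : Market B S) (st : MState B S)
    (hM : IsBipartiteMatching st.M) :
    ∑ p ∈ st.M, (st.PS p.2 - st.PB p.1)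
      + ∑ b ∈ univ.filter (fun b : B => ¬ BMatched st b), (Mk.valB b - st.PB b)
      + ∑ s ∈ univ.filter (fun s : S => ¬ SMatched st s), (st.PS s - Mk.valS s) =
    DualValue (fun b => Mk.valB b - st.PB b) (fun s => st.PS s - Mk.valS s) - SW Mk st.M := by
  have hB : univ.filter (fun b => ¬ BMatched st b) = (st.M.image Prod.fst)ᶜ := by
    ext; simp [BMatched]
  have hS : univ.filter (fun s => ¬ SMatched st s) = (st.M.image Prod.snd)ᶜ := by
    ext; simp [SMatched]
  rw [DualValue, SW, hB, hS, ← sum_add_sum_compl (st.M.image Prod.fst),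
    ← sum_add_sum_compl (st.M.image Prod.snd), sum_image hM.1, sum_image hM.2]
  simp only [sum_sub_distrib]
  ring

open scoped Classical in
/-- optimal primal/dual solutions coming from a matching `Π` and a valid
price function `P` yield a stable state; in particular the complementary-slackness sum
`Σ_{(B,S)∈Π} (P(S) − P(B)) + Σ_{Z∉Π} y^P(Z) = 0`, which forces equal prices on matched
pairs and valuation prices for unmatched agents. -/
theorem primal_dual_optimal_implies_stable [DecidableEq B] [DecidableEq S]
    (Mk : Market B S) (st : MState B S)
    (hmatching : IsMatching Mk st.M)
    (hPB : ∀ b, st.PB b ≤ Mk.valB b) (hPS : ∀ s, Mk.valS s ≤ st.PS s)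
    (hprimal : PrimalOptimal Mk (charVec st.M))
    (hdual : DualOptimal Mk (fun b => Mk.valB b - st.PB b) (fun s => st.PS s - Mk.valS s)) :
    IsStable Mk st ∧
    (∑ p ∈ st.M, (st.PS p.2 - st.PB p.1)
      + ∑ b ∈ Finset.univ.filter (fun b : B => ¬ BMatched st b), (Mk.valB b - st.PB b)
      + ∑ s ∈ Finset.univ.filter (fun s : S => ¬ SMatched st s), (st.PS s - Mk.valS s) = 0) ∧
    (∀ p ∈ st.M, st.PB p.1 = st.PS p.2) ∧
    (∀ b, ¬ BMatched st b → st.PB b = Mk.valB b) ∧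
    (∀ s, ¬ SMatched st s → st.PS s = Mk.valS s) := by
  have hedge : ∀ p ∈ Mk.E, st.PB p.1 ≤ st.PS p.2 := fun p hp => by
    have := hdual.1.2.2 p hp
    simp only [edgeWeight] at this
    linarith
  have hpair : ∀ p ∈ st.M, 0 ≤ st.PS p.2 - st.PB p.1 :=
    fun p hp => sub_nonneg.2 (hedge p (hmatching.1 hp))
  have hbuyer : ∀ b ∈ univ.filter (fun b : B => ¬ BMatched st b), 0 ≤ Mk.valB b - st.PB b :=
    fun b _ => sub_nonneg.2 (hPB b)
  have hseller : ∀ s ∈ univ.filter (fun s : S => ¬ SMatched st s), 0 ≤ st.PS s - Mk.valS s :=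
    fun s _ => sub_nonneg.2 (hPS s)
  have hslack := slack_sum_eq_dualValue_sub_SW Mk st hmatching.2
  have hgap := dualValue_le_SW hprimal hmatching.1 hdual
  have hpair_sum := sum_nonneg hpair
  have hbuyer_sum := sum_nonneg hbuyer
  have hseller_sum := sum_nonneg hseller
  have hmp : ∀ p ∈ st.M, st.PB p.1 = st.PS p.2 := fun p hp => by
    linarith [(sum_eq_zero_iff_of_nonneg hpair).1 (by linarith) p hp]
  have hub : ∀ b, ¬ BMatched st b → st.PB b = Mk.valB b := fun b hb => by
    linarith [(sum_eq_zero_iff_of_nonneg hbuyer).1 (by linarith) b (by simpa using hb)]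
  have hus : ∀ s, ¬ SMatched st s → st.PS s = Mk.valS s := fun s hs => by
    linarith [(sum_eq_zero_iff_of_nonneg hseller).1 (by linarith) s (by simpa using hs)]
  exact ⟨⟨hedge, hub, hus, hmp⟩, by linarith, hmp, hub, hus⟩
end

section
/- In a market whose trading graph is the complete bipartite graph, under the double-oral-auction mechanism with price increment ε started from a valid starting state, at every reachable state (P, Π): for every buyer-seller pair (B,S), if P(B) > P(S) then both B and S are matched in Π. -/
/-! The mechanism preserves three properties: all prices lie on the grid `ε ℤ`, matched
partners submit equal prices, and a bid strictly above an offer only occurs between two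
matched agents. Only the last one is the theorem; the other two make it inductive.
A new bid that no seller is interested in is below every offer: a matched seller is
uninterested only if his offer exceeds the bid minus `ε`, which on the grid means it is at
least the bid. When a buyer matches with a seller, offers only go up, so an over-price pair
of the new state is one of the old state, and the only agent who can lose his partner is the
buyer displaced from the seller. His bid equals the seller's old offer, which is at least `ε`
below the new price and hence, by the increment rule, not above any offer. Sellers are
handled by the duality that exchanges the two sides and negates all prices. -/

open Finset

variable {B S : Type*} [Fintype B] [Fintype S]

/-- `x` is an integer multiple of `ε`. -/
def MulEps (ε x : ℝ) : Prop := ∃ k : ℤ, x = k * ε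

variable [DecidableEq B] [DecidableEq S]

/-- Seller `s` is ε-interested in buyer `b` bidding `b'`. -/
def SellerInterested (Mk : Market B S) (ε : ℝ) (st : MState B S) (b' : ℝ) (b : B) (s : S) : Prop :=
  (b, s) ∈ Mk.E ∧ ((¬ SMatched st s ∧ st.PS s ≤ b') ∨ (SMatched st s ∧ st.PS s + ε ≤ b'))

/-- Buyer `b` is ε-interested in seller `s` offering `s'`. -/
def BuyerInterested (Mk : Market B S) (ε : ℝ) (st : MState B S) (s' : ℝ) (s : S) (b : B) : Prop :=
  (b, s) ∈ Mk.E ∧ ((¬ BMatched st b ∧ s' ≤ st.PB b) ∨ (BMatched st b ∧ s' + ε ≤ st.PB b))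

/-- Increment rule for a buyer: a new bid is at most (lowest neighbouring offer + ε) and
at most the lowest offer of an unmatched neighbouring seller. -/
def BuyIncrOK (Mk : Market B S) (ε : ℝ) (st : MState B S) (b : B) (b' : ℝ) : Prop :=
  (∀ s, (b, s) ∈ Mk.E → b' ≤ st.PS s + ε) ∧
  (∀ s, (b, s) ∈ Mk.E → ¬ SMatched st s → b' ≤ st.PS s)

/-- Increment rule for a seller. -/
def SellIncrOK (Mk : Market B S) (ε : ℝ) (st : MState B S) (s : S) (s' : ℝ) : Prop :=
  (∀ b, (b, s) ∈ Mk.E → st.PB b - ε ≤ s') ∧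
  (∀ b, (b, s) ∈ Mk.E → ¬ BMatched st b → st.PB b ≤ s')

/-- Match `b` with `s` at price `price`, displacing any previous partner of `s` (resp. `b`)
and equalizing the two submitted prices. -/
def matchPair (st : MState B S) (b : B) (s : S) (price : ℝ) : MState B S where
  PB := Function.update st.PB b price
  PS := Function.update st.PS s price
  M := insert (b, s) (st.M.filter fun p => p.1 ≠ b ∧ p.2 ≠ s)

/-- One legal move of the DOA mechanism (Mechanism 1): an arbitrary recognized unmatched
agent either submits an improving price (respecting the minimum-increment and increment
rules, when no counterpart is interested) or matches with an ε-interested counterpart,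
giving priority to unmatched counterparts. -/
inductive Step (Mk : Market B S) (ε : ℝ) : MState B S → MState B S → Prop
  | buyBid (st : MState B S) (b : B) (b' : ℝ) :
      ¬ BMatched st b → st.PB b < b' → b' ≤ Mk.valB b → MulEps ε b' →
      BuyIncrOK Mk ε st b b' →
      (∀ s, ¬ SellerInterested Mk ε st b' b s) →
      Step Mk ε st ⟨Function.update st.PB b b', st.PS, st.M⟩
  | buyMatch (st : MState B S) (b : B) (b' : ℝ) (s : S) :
      ¬ BMatched st b → st.PB b ≤ b' → b' ≤ Mk.valB b → MulEps ε b' →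
      BuyIncrOK Mk ε st b b' →
      SellerInterested Mk ε st b' b s →
      ((∃ s₀, SellerInterested Mk ε st b' b s₀ ∧ ¬ SMatched st s₀) → ¬ SMatched st s) →
      Step Mk ε st (matchPair st b s b')
  | sellOffer (st : MState B S) (s : S) (s' : ℝ) :
      ¬ SMatched st s → s' < st.PS s → Mk.valS s ≤ s' → MulEps ε s' →
      SellIncrOK Mk ε st s s' →
      (∀ b, ¬ BuyerInterested Mk ε st s' s b) →
      Step Mk ε st ⟨st.PB, Function.update st.PS s s', st.M⟩
  | sellMatch (st : MState B S) (s : S) (s' : ℝ) (b : B) :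
      ¬ SMatched st s → s' ≤ st.PS s → Mk.valS s ≤ s' → MulEps ε s' →
      SellIncrOK Mk ε st s s' →
      BuyerInterested Mk ε st s' s b →
      ((∃ b₀, BuyerInterested Mk ε st s' s b₀ ∧ ¬ BMatched st b₀) → ¬ BMatched st b) →
      Step Mk ε st (matchPair st b s s')

/-- A valid starting state: valid, bids below offers on every edge, prices in `[0,1]`
and integer multiples of `ε`. -/
def ValidStart (Mk : Market B S) (ε : ℝ) (st : MState B S) : Prop :=
  ValidState Mk st ∧ (∀ p ∈ Mk.E, st.PB p.1 ≤ st.PS p.2) ∧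
  (∀ b, 0 ≤ st.PB b) ∧ (∀ s, st.PS s ≤ 1) ∧
  (∀ b, MulEps ε (st.PB b)) ∧ (∀ s, MulEps ε (st.PS s))

/-- Reachability by a sequence of legal moves. -/
def Reachable (Mk : Market B S) (ε : ℝ) : MState B S → MState B S → Prop :=
  Relation.ReflTransGen (Step Mk ε)


lemma MulEps.neg {ε x : ℝ} (hx : MulEps ε x) : MulEps ε (-x) := by
  obtain ⟨k, rfl⟩ := hx
  exact ⟨-k, by push_cast; ring⟩

lemma MulEps.le_of_lt_add {ε x y : ℝ} (hε : 0 < ε) (hx : MulEps ε x) (hy : MulEps ε y)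
    (h : x < y + ε) : x ≤ y := by
  obtain ⟨k, rfl⟩ := hx
  obtain ⟨m, rfl⟩ := hy
  have hkm : (k : ℝ) < m + 1 := lt_of_mul_lt_mul_right (by linarith) hε.le
  have hkm' : (k : ℝ) ≤ m := by exact_mod_cast Int.lt_add_one_iff.mp (by exact_mod_cast hkm)
  exact mul_le_mul_of_nonneg_right hkm' hε.le

open MState

section

omit [Fintype B] [Fintype S] [DecidableEq B] [DecidableEq S]

structure PriceInvariant (ε : ℝ) (st : MState B S) : Prop where
  bid_mulEps : ∀ b, MulEps ε (st.PB b)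
  offer_mulEps : ∀ s, MulEps ε (st.PS s)
  bid_eq_offer : ∀ p ∈ st.M, st.PB p.1 = st.PS p.2
  matched_of_offer_lt_bid : ∀ b s, st.PS s < st.PB b → BMatched st b ∧ SMatched st s

namespace MState

/-- The market seen from the other side: sellers become buyers, and negating the prices
turns lowering an offer into raising a bid. -/
def dual (st : MState B S) : MState S B where
  PB s := -st.PS s
  PS b := -st.PB b
  M := st.M.map (Equiv.prodComm B S).toEmbedding

@[simp]
lemma mem_dual_M {st : MState B S} {q : S × B} : q ∈ st.dual.M ↔ q.swap ∈ st.M := by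
  simp only [dual, mem_map_equiv, Equiv.prodComm_symm, Equiv.prodComm_apply]

lemma dual_dual (st : MState B S) : st.dual.dual = st := by
  obtain ⟨PB, PS, M⟩ := st
  simp only [dual, neg_neg, map_map, mk.injEq, true_and]
  exact map_refl

lemma bMatched_dual {st : MState B S} {s : S} : BMatched st.dual s ↔ SMatched st s := by
  simp [BMatched, SMatched]

lemma sMatched_dual {st : MState B S} {b : B} : SMatched st.dual b ↔ BMatched st b := by
  simp [BMatched, SMatched]

end MState

namespace PriceInvariant

variable {ε : ℝ} {st : MState B S}

lemma dual (h : PriceInvariant ε st) : PriceInvariant ε st.dual where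
  bid_mulEps s := (h.offer_mulEps s).neg
  offer_mulEps b := (h.bid_mulEps b).neg
  bid_eq_offer q hq := by
    simpa only [MState.dual, neg_inj, Prod.fst_swap, Prod.snd_swap] using
      (h.bid_eq_offer q.swap (mem_dual_M.mp hq)).symm
  matched_of_offer_lt_bid s b hlt := by
    rw [bMatched_dual, sMatched_dual]
    exact (h.matched_of_offer_lt_bid b s (neg_lt_neg_iff.mp hlt)).symm

lemma of_dual (h : PriceInvariant ε st.dual) : PriceInvariant ε st :=
  st.dual_dual ▸ h.dual

end PriceInvariant

end

section

omit [Fintype B] [Fintype S]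

omit [DecidableEq B] in
lemma MState.dual_updateOffer (st : MState B S) (s : S) (p : ℝ) :
    (⟨st.PB, Function.update st.PS s p, st.M⟩ : MState B S).dual =
      ⟨Function.update st.dual.PB s (-p), st.dual.PS, st.dual.M⟩ := by
  simp only [MState.dual, mk.injEq, and_true]
  ext x; by_cases hx : x = s <;> simp [hx]

lemma MState.dual_matchPair (st : MState B S) (b : B) (s : S) (p : ℝ) :
    (matchPair st b s p).dual = matchPair st.dual s b (-p) := by
  simp only [MState.dual, matchPair, MState.mk.injEq]
  refine ⟨?_, ?_, ?_⟩
  · ext x; by_cases hx : x = s <;> simp [hx]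
  · ext x; by_cases hx : x = b <;> simp [hx]
  · ext ⟨x, y⟩; simp [and_comm]

lemma mem_matchPair_M {st : MState B S} {b : B} {s : S} {p : ℝ} {q : B × S} :
    q ∈ (matchPair st b s p).M ↔ q = (b, s) ∨ (q ∈ st.M ∧ q.1 ≠ b ∧ q.2 ≠ s) := by
  simp [matchPair]

lemma le_matchPair_PS {st : MState B S} {b : B} {s : S} {p : ℝ} (hs : st.PS s ≤ p) (s₂ : S) :
    st.PS s₂ ≤ (matchPair st b s p).PS s₂ := by
  by_cases hs₂ : s₂ = s
  · subst hs₂; simpa [matchPair] using hs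
  · simp [matchPair, Function.update_of_ne hs₂]

namespace PriceInvariant

variable {ε : ℝ} {st : MState B S}

omit [DecidableEq S] in
lemma updateBid (h : PriceInvariant ε st) {b : B} {p : ℝ} (hb : ¬ BMatched st b)
    (hp : MulEps ε p) (hle : ∀ s, p ≤ st.PS s) :
    PriceInvariant ε ⟨Function.update st.PB b p, st.PS, st.M⟩ where
  bid_mulEps := Function.forall_update_iff _ (p := fun _ x => MulEps ε x) |>.mpr
    ⟨hp, fun b₂ _ => h.bid_mulEps b₂⟩
  offer_mulEps := h.offer_mulEps
  bid_eq_offer q hq := by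
    have hqb : q.1 ≠ b := fun hqb => hb ⟨q.2, hqb ▸ hq⟩
    simpa [Function.update_of_ne hqb] using h.bid_eq_offer q hq
  matched_of_offer_lt_bid b₂ s hlt := by
    by_cases hb₂ : b₂ = b
    · subst hb₂
      simp only [Function.update_self] at hlt
      exact absurd (hle s) hlt.not_ge
    · simp only [Function.update_of_ne hb₂] at hlt
      exact h.matched_of_offer_lt_bid b₂ s hlt

omit [DecidableEq B] in
lemma updateOffer (h : PriceInvariant ε st) {s : S} {p : ℝ} (hs : ¬ SMatched st s)
    (hp : MulEps ε p) (hle : ∀ b, st.PB b ≤ p) :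
    PriceInvariant ε ⟨st.PB, Function.update st.PS s p, st.M⟩ := by
  apply of_dual
  rw [dual_updateOffer]
  exact h.dual.updateBid (bMatched_dual.not.mpr hs) hp.neg fun b => neg_le_neg (hle b)

lemma matchBuyer (h : PriceInvariant ε st) {b : B} {s : S} {p : ℝ} (hb : ¬ BMatched st b)
    (hp : MulEps ε p) (hs : st.PS s ≤ p) (hsm : SMatched st s → st.PS s + ε ≤ p)
    (hincr : ∀ s₂, p ≤ st.PS s₂ + ε) (hunm : ∀ s₂, ¬ SMatched st s₂ → p ≤ st.PS s₂) :
    PriceInvariant ε (matchPair st b s p) where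
  bid_mulEps := Function.forall_update_iff _ (p := fun _ x => MulEps ε x) |>.mpr
    ⟨hp, fun b₂ _ => h.bid_mulEps b₂⟩
  offer_mulEps := Function.forall_update_iff _ (p := fun _ x => MulEps ε x) |>.mpr
    ⟨hp, fun s₂ _ => h.offer_mulEps s₂⟩
  bid_eq_offer q hq := by
    rcases mem_matchPair_M.mp hq with rfl | ⟨hq, hqb, hqs⟩
    · simp [matchPair]
    · simpa [matchPair, Function.update_of_ne hqb, Function.update_of_ne hqs] using
        h.bid_eq_offer q hq
  matched_of_offer_lt_bid b₂ s₂ hlt := by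
    set st' := matchPair st b s p
    have new_mem : (b, s) ∈ st'.M := mem_matchPair_M.mpr (Or.inl rfl)
    have old_mem {b₃ s₃} (hm : (b₃, s₃) ∈ st.M) (hb₃ : b₃ ≠ b) (hs₃ : s₃ ≠ s) :
        (b₃, s₃) ∈ st'.M :=
      mem_matchPair_M.mpr (Or.inr ⟨hm, hb₃, hs₃⟩)
    have partner_ne {b₃ s₃} (hm : (b₃, s₃) ∈ st.M) : b₃ ≠ b := fun hb₃ => hb ⟨s₃, hb₃ ▸ hm⟩
    have displaced_le (hsm' : SMatched st s) : st.PS s ≤ st'.PS s₂ := by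
      by_cases hs₂ : s₂ = s
      · subst hs₂; simpa [st', matchPair] using hs
      · simp only [st', matchPair, Function.update_of_ne hs₂]
        linarith [hsm hsm', hincr s₂]
    by_cases hb₂ : b₂ = b
    · subst hb₂
      refine ⟨⟨s, new_mem⟩, ?_⟩
      by_cases hs₂ : s₂ = s
      · exact hs₂ ▸ ⟨b₂, new_mem⟩
      have hlt' : st.PS s₂ < p := by
        simpa [st', matchPair, Function.update_of_ne hs₂] using hlt
      obtain ⟨b₃, hb₃⟩ : SMatched st s₂ := by
        by_contra hs₂m
        exact (hunm s₂ hs₂m).not_gt hlt'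
      exact ⟨b₃, old_mem hb₃ (partner_ne hb₃) hs₂⟩
    · have hbid : st'.PB b₂ = st.PB b₂ := by simp [st', matchPair, Function.update_of_ne hb₂]
      obtain ⟨⟨s₃, hs₃⟩, ⟨b₃, hb₃⟩⟩ :=
        h.matched_of_offer_lt_bid b₂ s₂ (by linarith [le_matchPair_PS (b := b) hs s₂])
      constructor
      · by_cases hs₃s : s₃ = s
        · subst hs₃s
          have hbid' : st'.PB b₂ = st.PS s₃ := hbid.trans (h.bid_eq_offer _ hs₃)
          exact absurd hlt (hbid' ▸ displaced_le ⟨b₂, hs₃⟩).not_gt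
        · exact ⟨s₃, old_mem hs₃ hb₂ hs₃s⟩
      · by_cases hs₂ : s₂ = s
        · exact hs₂ ▸ ⟨b, new_mem⟩
        · exact ⟨b₃, old_mem hb₃ (partner_ne hb₃) hs₂⟩

lemma matchSeller (h : PriceInvariant ε st) {b : B} {s : S} {p : ℝ} (hs : ¬ SMatched st s)
    (hp : MulEps ε p) (hb : p ≤ st.PB b) (hbm : BMatched st b → p + ε ≤ st.PB b)
    (hincr : ∀ b₂, st.PB b₂ - ε ≤ p) (hunm : ∀ b₂, ¬ BMatched st b₂ → st.PB b₂ ≤ p) :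
    PriceInvariant ε (matchPair st b s p) := by
  apply of_dual
  rw [dual_matchPair]
  refine h.dual.matchBuyer (bMatched_dual.not.mpr hs) hp.neg (neg_le_neg hb)
    (fun hbm' => ?_) (fun b₂ => ?_)
    (fun b₂ hb₂ => neg_le_neg (hunm b₂ (sMatched_dual.not.mp hb₂)))
  · linarith [hbm (sMatched_dual.mp hbm'), show st.dual.PS b = -st.PB b from rfl]
  · linarith [hincr b₂, show st.dual.PS b₂ = -st.PB b₂ from rfl]

end PriceInvariant

end

section Mechanism

variable {Mk : Market B S} {ε : ℝ} {st : MState B S}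

omit [DecidableEq B] [DecidableEq S] in
lemma le_offer_of_not_sellerInterested (hε : 0 < ε) (hS : ∀ s, MulEps ε (st.PS s))
    {b : B} {s : S} {p : ℝ} (hp : MulEps ε p) (hbs : (b, s) ∈ Mk.E)
    (h : ¬ SellerInterested Mk ε st p b s) : p ≤ st.PS s := by
  simp only [SellerInterested, hbs, true_and, not_or, not_and, not_le] at h
  by_cases hs : SMatched st s
  · exact hp.le_of_lt_add hε (hS s) (h.2 hs)
  · exact (h.1 hs).le

omit [DecidableEq B] [DecidableEq S] in
lemma bid_le_of_not_buyerInterested (hε : 0 < ε) (hB : ∀ b, MulEps ε (st.PB b))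
    {b : B} {s : S} {p : ℝ} (hp : MulEps ε p) (hbs : (b, s) ∈ Mk.E)
    (h : ¬ BuyerInterested Mk ε st p s b) : st.PB b ≤ p := by
  simp only [BuyerInterested, hbs, true_and, not_or, not_and, not_le] at h
  by_cases hb : BMatched st b
  · exact (hB b).le_of_lt_add hε hp (by linarith [h.2 hb])
  · exact (h.1 hb).le

lemma PriceInvariant.step (hE : Mk.E = univ) (hε : 0 < ε) (h : PriceInvariant ε st)
    {st' : MState B S} (hstep : Step Mk ε st st') : PriceInvariant ε st' := by
  have edge (b : B) (s : S) : (b, s) ∈ Mk.E := hE ▸ mem_univ _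
  cases hstep with
  | buyBid b p hb _ _ hp _ hni =>
    exact h.updateBid hb hp fun s =>
      le_offer_of_not_sellerInterested hε h.offer_mulEps hp (edge b s) (hni s)
  | sellOffer s p hs _ _ hp _ hni =>
    exact h.updateOffer hs hp fun b =>
      bid_le_of_not_buyerInterested hε h.bid_mulEps hp (edge b s) (hni b)
  | buyMatch b p s hb _ _ hp hincr hint _ =>
    refine h.matchBuyer hb hp ?_ (fun hs => ?_) (fun s₂ => hincr.1 s₂ (edge b s₂))
      (fun s₂ => hincr.2 s₂ (edge b s₂))
    · rcases hint.2 with ⟨_, hle⟩ | ⟨_, hle⟩ <;> linarith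
    · exact hint.2.resolve_left (fun hu => hu.1 hs) |>.2
  | sellMatch s p b hs _ _ hp hincr hint _ =>
    refine h.matchSeller hs hp ?_ (fun hb => ?_) (fun b₂ => hincr.1 b₂ (edge b₂ s))
      (fun b₂ => hincr.2 b₂ (edge b₂ s))
    · rcases hint.2 with ⟨_, hle⟩ | ⟨_, hle⟩ <;> linarith
    · exact hint.2.resolve_left (fun hu => hu.1 hb) |>.2

omit [DecidableEq B] [DecidableEq S] in
lemma PriceInvariant.of_validStart (hE : Mk.E = univ) (h : ValidStart Mk ε st) :
    PriceInvariant ε st where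
  bid_mulEps := h.2.2.2.2.1
  offer_mulEps := h.2.2.2.2.2
  bid_eq_offer q hq := le_antisymm (h.2.1 q (h.1.1.1 hq)) (h.1.2.2.2 q hq)
  matched_of_offer_lt_bid b s hlt :=
    absurd (h.2.1 (b, s) (hE ▸ mem_univ _)) hlt.not_ge

end Mechanism

/-- no-over-price lemma: on a complete bipartite trading graph, at any
state reachable from a valid starting state, a bid strictly above an offer implies both
agents are matched. -/
theorem no_over_price_complete
    (Mk : Market B S) (hE : Mk.E = Finset.univ) (ε : ℝ) (hε : 0 < ε)
    (st₀ st : MState B S) (h₀ : ValidStart Mk ε st₀) (hr : Reachable Mk ε st₀ st) :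
    ∀ (b : B) (s : S), st.PS s < st.PB b → BMatched st b ∧ SMatched st s := by
  have hinv : PriceInvariant ε st := by
    induction hr with
    | refl => exact .of_validStart hE h₀
    | tail _ hstep ih => exact ih.step hE hε hstep
  exact hinv.matched_of_offer_lt_bid
end

section
/- In the complete bipartite double-oral-auction mechanism, a buyer can make a no-change move (a move that overbids a matched seller while leaving the potential Φ_P unchanged) only if his bid equals the current lowest seller offer, and symmetrically a seller can make a no-change move only if his offer equals the current highest buyer bid. -/
open Finset

variable {B S : Type*} [Fintype B] [Fintype S]

variable [DecidableEq B] [DecidableEq S]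

/-- The potential `Φ_P = Σ_S P(S) + Σ_B (1 − P(B))`. -/
def Phi (st : MState B S) : ℝ := ∑ s : S, st.PS s + ∑ b : B, (1 - st.PB b)

lemma sum_update_eq_sum_add {α : Type*} [Fintype α] [DecidableEq α] (f : α → ℝ) (a : α) (v : ℝ) :
    ∑ x, Function.update f a v x = ∑ x, f x + (v - f a) := by
  rw [Finset.sum_update_of_mem (Finset.mem_univ a), Finset.sdiff_singleton_eq_erase,
    ← Finset.sum_erase_add Finset.univ f (Finset.mem_univ a)]
  ring

section MatchPair

omit [Fintype B] [Fintype S]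

variable {st : MState B S} {b b₃ : B} {s s₃ : S} {p : ℝ}

@[simp]
lemma matchPair_PB : (matchPair st b s p).PB = Function.update st.PB b p := rfl

@[simp]
lemma matchPair_PS : (matchPair st b s p).PS = Function.update st.PS s p := rfl

lemma mem_matchPair {q : B × S} :
    q ∈ (matchPair st b s p).M ↔ q = (b, s) ∨ (q ∈ st.M ∧ q.1 ≠ b ∧ q.2 ≠ s) := by
  simp [matchPair]

lemma ne_and_partner_eq_of_not_bMatched_matchPair (h : ¬ BMatched (matchPair st b s p) b₃) :
    b₃ ≠ b ∧ ∀ s₄, (b₃, s₄) ∈ st.M → s₄ = s := by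
  have hb₃ : b₃ ≠ b := by
    rintro rfl
    exact h ⟨s, mem_matchPair.mpr (Or.inl rfl)⟩
  refine ⟨hb₃, fun s₄ hs₄ => ?_⟩
  by_contra hs₄s
  exact h ⟨s₄, mem_matchPair.mpr (Or.inr ⟨hs₄, hb₃, hs₄s⟩)⟩

lemma ne_and_partner_eq_of_not_sMatched_matchPair (h : ¬ SMatched (matchPair st b s p) s₃) :
    s₃ ≠ s ∧ ∀ b₄, (b₄, s₃) ∈ st.M → b₄ = b := by
  have hs₃ : s₃ ≠ s := by
    rintro rfl
    exact h ⟨b, mem_matchPair.mpr (Or.inl rfl)⟩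
  refine ⟨hs₃, fun b₄ hb₄ => ?_⟩
  by_contra hb₄b
  exact h ⟨b₄, mem_matchPair.mpr (Or.inr ⟨hb₄, hb₄b, hs₃⟩)⟩

end MatchPair

lemma phi_matchPair (st : MState B S) (b : B) (s : S) (p : ℝ) :
    Phi (matchPair st b s p) = Phi st + (st.PB b - st.PS s) := by
  simp only [Phi, matchPair_PB, matchPair_PS, Finset.sum_sub_distrib, sum_update_eq_sum_add]
  ring

section Interest

omit [DecidableEq B] [DecidableEq S]

variable {Mk : Market B S} {ε : ℝ} {st : MState B S} {b : B} {s : S} {b' s' : ℝ}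

lemma SellerInterested.offer_le (hε : 0 ≤ ε) (h : SellerInterested Mk ε st b' b s) :
    st.PS s ≤ b' := by
  rcases h.2 with ⟨_, h⟩ | ⟨_, h⟩ <;> linarith

lemma SellerInterested.offer_add_le (h : SellerInterested Mk ε st b' b s) (hs : SMatched st s) :
    st.PS s + ε ≤ b' := by
  rcases h.2 with ⟨hs', _⟩ | ⟨_, h⟩
  exacts [absurd hs hs', h]

lemma BuyerInterested.le_bid (hε : 0 ≤ ε) (h : BuyerInterested Mk ε st s' s b) :
    s' ≤ st.PB b := by
  rcases h.2 with ⟨_, h⟩ | ⟨_, h⟩ <;> linarith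

lemma BuyerInterested.add_le_bid (h : BuyerInterested Mk ε st s' s b) (hb : BMatched st b) :
    s' + ε ≤ st.PB b := by
  rcases h.2 with ⟨hb', _⟩ | ⟨_, h⟩
  exacts [absurd hb hb', h]

lemma le_offer_of_forall_not_sellerInterested (hE : Mk.E = univ) (hε : 0 < ε)
    (hgrid : ∀ s, MulEps ε (st.PS s)) (hb' : MulEps ε b')
    (hno : ∀ s, ¬ SellerInterested Mk ε st b' b s) (s : S) : b' ≤ st.PS s := by
  have hedge : (b, s) ∈ Mk.E := by simp [hE]
  by_cases hs : SMatched st s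
  · exact hb'.le_of_lt_add hε (hgrid s) (lt_of_not_ge fun h => hno s ⟨hedge, Or.inr ⟨hs, h⟩⟩)
  · exact le_of_lt (lt_of_not_ge fun h => hno s ⟨hedge, Or.inl ⟨hs, h⟩⟩)

lemma bid_le_of_forall_not_buyerInterested (hE : Mk.E = univ) (hε : 0 < ε)
    (hgrid : ∀ b, MulEps ε (st.PB b)) (hs' : MulEps ε s')
    (hno : ∀ b, ¬ BuyerInterested Mk ε st s' s b) (b : B) : st.PB b ≤ s' := by
  have hedge : (b, s) ∈ Mk.E := by simp [hE]
  by_cases hb : BMatched st b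
  · exact (hgrid b).le_of_lt_add hε hs' (lt_of_not_ge fun h => hno b ⟨hedge, Or.inr ⟨hb, h⟩⟩)
  · exact le_of_lt (lt_of_not_ge fun h => hno b ⟨hedge, Or.inl ⟨hb, h⟩⟩)

end Interest

/-- The no-over-price invariant of Mechanism 1 on a complete bipartite graph. -/
structure DOAInvariant (ε : ℝ) (st : MState B S) : Prop where
  unmatched_bid_le : ∀ b, ¬ BMatched st b → ∀ s, st.PB b ≤ st.PS s
  le_unmatched_offer : ∀ s, ¬ SMatched st s → ∀ b, st.PB b ≤ st.PS s
  matched_eq : ∀ q ∈ st.M, st.PB q.1 = st.PS q.2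
  bid_mulEps : ∀ b, MulEps ε (st.PB b)
  offer_mulEps : ∀ s, MulEps ε (st.PS s)

namespace DOAInvariant

variable {Mk : Market B S} {ε : ℝ} {st : MState B S} {b : B} {s : S} {p : ℝ}

omit [DecidableEq B] [DecidableEq S] in
lemma of_validStart (hE : Mk.E = univ) (h : ValidStart Mk ε st) : DOAInvariant ε st := by
  obtain ⟨⟨hmatching, -, -, hmatched⟩, hbid_le, -, -, hbid, hoffer⟩ := h
  have hedge : ∀ (b : B) (s : S), (b, s) ∈ Mk.E := by simp [hE]
  exact ⟨fun b _ s => hbid_le (b, s) (hedge b s), fun s _ b => hbid_le (b, s) (hedge b s),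
    fun q hq => le_antisymm (hbid_le q (hmatching.1 hq)) (hmatched q hq), hbid, hoffer⟩

omit [Fintype B] [Fintype S] [DecidableEq S] in
lemma update_bid (hI : DOAInvariant ε st) (hb : ¬ BMatched st b) (hp : MulEps ε p)
    (hle : ∀ s, p ≤ st.PS s) : DOAInvariant ε ⟨Function.update st.PB b p, st.PS, st.M⟩ where
  unmatched_bid_le b₃ hb₃ s₃ := by
    rcases eq_or_ne b₃ b with rfl | hne
    · simpa using hle s₃
    · simpa [hne] using hI.unmatched_bid_le b₃ hb₃ s₃
  le_unmatched_offer s₃ hs₃ b₃ := by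
    rcases eq_or_ne b₃ b with rfl | hne
    · simpa using hle s₃
    · simpa [hne] using hI.le_unmatched_offer s₃ hs₃ b₃
  matched_eq q hq := by
    have hne : q.1 ≠ b := by
      rintro rfl
      exact hb ⟨q.2, hq⟩
    simpa [hne] using hI.matched_eq q hq
  bid_mulEps := (Function.forall_update_iff _ fun _ x => MulEps ε x).mpr
    ⟨hp, fun b₃ _ => hI.bid_mulEps b₃⟩
  offer_mulEps := hI.offer_mulEps

omit [Fintype B] [Fintype S] [DecidableEq B] in
lemma update_offer (hI : DOAInvariant ε st) (hs : ¬ SMatched st s) (hp : MulEps ε p)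
    (hle : ∀ b, st.PB b ≤ p) : DOAInvariant ε ⟨st.PB, Function.update st.PS s p, st.M⟩ where
  unmatched_bid_le b₃ hb₃ s₃ := by
    rcases eq_or_ne s₃ s with rfl | hne
    · simpa using hle b₃
    · simpa [hne] using hI.unmatched_bid_le b₃ hb₃ s₃
  le_unmatched_offer s₃ hs₃ b₃ := by
    rcases eq_or_ne s₃ s with rfl | hne
    · simpa using hle b₃
    · simpa [hne] using hI.le_unmatched_offer s₃ hs₃ b₃
  matched_eq q hq := by
    have hne : q.2 ≠ s := by
      rintro rfl
      exact hs ⟨q.1, hq⟩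
    simpa [hne] using hI.matched_eq q hq
  bid_mulEps := hI.bid_mulEps
  offer_mulEps := (Function.forall_update_iff _ fun _ x => MulEps ε x).mpr
    ⟨hp, fun s₃ _ => hI.offer_mulEps s₃⟩

omit [Fintype B] [Fintype S] in
lemma to_matchPair (hI : DOAInvariant ε st) (hp : MulEps ε p)
    (hbid : ∀ b₃, ¬ BMatched (matchPair st b s p) b₃ → ∀ s₃,
      st.PB b₃ ≤ Function.update st.PS s p s₃)
    (hoffer : ∀ s₃, ¬ SMatched (matchPair st b s p) s₃ → ∀ b₃,
      Function.update st.PB b p b₃ ≤ st.PS s₃) :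
    DOAInvariant ε (matchPair st b s p) where
  unmatched_bid_le b₃ hb₃ s₃ := by
    simpa [(ne_and_partner_eq_of_not_bMatched_matchPair hb₃).1] using hbid b₃ hb₃ s₃
  le_unmatched_offer s₃ hs₃ b₃ := by
    simpa [(ne_and_partner_eq_of_not_sMatched_matchPair hs₃).1] using hoffer s₃ hs₃ b₃
  matched_eq q hq := by
    rcases mem_matchPair.mp hq with rfl | ⟨hq, hb, hs⟩
    · simp
    · simpa [hb, hs] using hI.matched_eq q hq
  bid_mulEps := (Function.forall_update_iff _ fun _ x => MulEps ε x).mpr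
    ⟨hp, fun b₃ _ => hI.bid_mulEps b₃⟩
  offer_mulEps := (Function.forall_update_iff _ fun _ x => MulEps ε x).mpr
    ⟨hp, fun s₃ _ => hI.offer_mulEps s₃⟩

lemma buyMatch (hE : Mk.E = univ) (hε : 0 < ε) (hI : DOAInvariant ε st) (hb : ¬ BMatched st b)
    (hp : MulEps ε p) (hinc : BuyIncrOK Mk ε st b p) (hint : SellerInterested Mk ε st p b s) :
    DOAInvariant ε (matchPair st b s p) := by
  have hedge : ∀ (b : B) (s : S), (b, s) ∈ Mk.E := by simp [hE]
  refine hI.to_matchPair hp (fun b₃ hb₃ s₃ => ?_) (fun s₃ hs₃ b₃ => ?_)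
  · obtain ⟨-, hpartner⟩ := ne_and_partner_eq_of_not_bMatched_matchPair hb₃
    by_cases hbm : BMatched st b₃
    · -- `b₃` is the buyer displaced from `s`: its bid equals the old offer of `s`
      obtain ⟨s₄, hs₄⟩ := hbm
      obtain rfl := hpartner s₄ hs₄
      have hgap := hint.offer_add_le ⟨b₃, hs₄⟩
      rw [hI.matched_eq _ hs₄]
      rcases eq_or_ne s₃ s₄ with rfl | hne
      · rw [Function.update_self]; linarith
      · rw [Function.update_of_ne hne]; linarith [hinc.1 s₃ (hedge b s₃)]
    · have hle := hI.unmatched_bid_le b₃ hbm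
      rcases eq_or_ne s₃ s with rfl | hne
      · simpa using (hle s₃).trans (hint.offer_le hε.le)
      · simpa [hne] using hle s₃
  · obtain ⟨-, hpartner⟩ := ne_and_partner_eq_of_not_sMatched_matchPair hs₃
    have hsm : ¬ SMatched st s₃ := fun ⟨b₄, hb₄⟩ => hb ⟨s₃, hpartner b₄ hb₄ ▸ hb₄⟩
    rcases eq_or_ne b₃ b with rfl | hne
    · simpa using hinc.2 s₃ (hedge b₃ s₃) hsm
    · simpa [hne] using hI.le_unmatched_offer s₃ hsm b₃

lemma sellMatch (hE : Mk.E = univ) (hε : 0 < ε) (hI : DOAInvariant ε st) (hs : ¬ SMatched st s)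
    (hp : MulEps ε p) (hinc : SellIncrOK Mk ε st s p) (hint : BuyerInterested Mk ε st p s b) :
    DOAInvariant ε (matchPair st b s p) := by
  have hedge : ∀ (b : B) (s : S), (b, s) ∈ Mk.E := by simp [hE]
  refine hI.to_matchPair hp (fun b₃ hb₃ s₃ => ?_) (fun s₃ hs₃ b₃ => ?_)
  · obtain ⟨-, hpartner⟩ := ne_and_partner_eq_of_not_bMatched_matchPair hb₃
    have hbm : ¬ BMatched st b₃ := fun ⟨s₄, hs₄⟩ => hs ⟨b₃, hpartner s₄ hs₄ ▸ hs₄⟩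
    rcases eq_or_ne s₃ s with rfl | hne
    · simpa using hinc.2 b₃ (hedge b₃ s₃) hbm
    · simpa [hne] using hI.unmatched_bid_le b₃ hbm s₃
  · obtain ⟨-, hpartner⟩ := ne_and_partner_eq_of_not_sMatched_matchPair hs₃
    by_cases hsm : SMatched st s₃
    · -- `s₃` is the seller displaced from `b`: its offer equals the old bid of `b`
      obtain ⟨b₄, hb₄⟩ := hsm
      obtain rfl := hpartner b₄ hb₄
      have hgap := hint.add_le_bid ⟨s₃, hb₄⟩
      rw [← hI.matched_eq _ hb₄]
      rcases eq_or_ne b₃ b₄ with rfl | hne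
      · rw [Function.update_self]; linarith
      · rw [Function.update_of_ne hne]; linarith [hinc.1 b₃ (hedge b₃ s)]
    · have hle := hI.le_unmatched_offer s₃ hsm
      rcases eq_or_ne b₃ b with rfl | hne
      · simpa using (hint.le_bid hε.le).trans (hle b₃)
      · simpa [hne] using hle b₃

lemma step (hE : Mk.E = univ) (hε : 0 < ε) (hI : DOAInvariant ε st) {st' : MState B S}
    (h : Step Mk ε st st') : DOAInvariant ε st' := by
  cases h with
  | buyBid b p hb _ _ hp _ hno =>
    exact hI.update_bid hb hp
      (le_offer_of_forall_not_sellerInterested hE hε hI.offer_mulEps hp hno)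
  | sellOffer s p hs _ _ hp _ hno =>
    exact hI.update_offer hs hp
      (bid_le_of_forall_not_buyerInterested hE hε hI.bid_mulEps hp hno)
  | buyMatch b p s hb _ _ hp hinc hint _ => exact hI.buyMatch hE hε hb hp hinc hint
  | sellMatch s p b hs _ _ hp hinc hint _ => exact hI.sellMatch hE hε hs hp hinc hint

lemma of_reachable (hE : Mk.E = univ) (hε : 0 < ε) {st₀ : MState B S}
    (h₀ : DOAInvariant ε st₀) (hr : Reachable Mk ε st₀ st) : DOAInvariant ε st := by
  induction hr with
  | refl => exact h₀
  | tail _ hstep ih => exact ih.step hE hε hstep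

end DOAInvariant

section Step

variable {Mk : Market B S} {ε : ℝ} {st st' : MState B S} {b : B} {s : S}

lemma Step.exists_eq_matchPair (h : Step Mk ε st st') (hnew : (b, s) ∈ st'.M)
    (hold : (b, s) ∉ st.M) : ∃ p, st' = matchPair st b s p := by
  cases h with
  | buyBid => exact absurd hnew hold
  | sellOffer => exact absurd hnew hold
  | buyMatch b₁ p s₁ =>
    rcases mem_matchPair.mp hnew with h | h
    · obtain ⟨rfl, rfl⟩ := Prod.mk.inj h
      exact ⟨p, rfl⟩
    · exact absurd h.1 hold
  | sellMatch s₁ p b₁ =>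
    rcases mem_matchPair.mp hnew with h | h
    · obtain ⟨rfl, rfl⟩ := Prod.mk.inj h
      exact ⟨p, rfl⟩
    · exact absurd h.1 hold

lemma Step.bid_eq_offer_of_phi_eq (h : Step Mk ε st st') (hΦ : Phi st' = Phi st)
    (hnew : (b, s) ∈ st'.M) (hold : (b, s) ∉ st.M) : st.PB b = st.PS s := by
  obtain ⟨p, rfl⟩ := h.exists_eq_matchPair hnew hold
  rw [phi_matchPair] at hΦ
  linarith

end Step

/-- in the complete-graph DOA mechanism, a buyer can make a no-change move
(overbidding a matched seller while leaving `Φ_P` unchanged) only if his bid equals the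
lowest seller offer; symmetrically, a seller can make a no-change move only if his offer
equals the highest buyer bid. -/
theorem no_change_move_characterization [Nonempty B] [Nonempty S]
    (Mk : Market B S) (hE : Mk.E = Finset.univ) (ε : ℝ) (hε : 0 < ε)
    (st₀ st st' : MState B S) (h₀ : ValidStart Mk ε st₀) (hr : Reachable Mk ε st₀ st)
    (hstep : Step Mk ε st st') (hΦ : Phi st' = Phi st) :
    (∀ (b : B) (s : S), ¬ BMatched st b → SMatched st s → (b, s) ∈ st'.M →
      st.PB b = Finset.univ.inf' Finset.univ_nonempty st.PS) ∧
    (∀ (b : B) (s : S), BMatched st b → ¬ SMatched st s → (b, s) ∈ st'.M →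
      st.PS s = Finset.univ.sup' Finset.univ_nonempty st.PB) := by
  have hI := (DOAInvariant.of_validStart hE h₀).of_reachable hE hε hr
  refine ⟨fun b s hb _ hnew => ?_, fun b s _ hs hnew => ?_⟩
  · have hprice := hstep.bid_eq_offer_of_phi_eq hΦ hnew fun h => hb ⟨s, h⟩
    exact le_antisymm (le_inf' _ _ fun s₃ _ => hI.unmatched_bid_le b hb s₃)
      ((inf'_le _ (mem_univ s)).trans_eq hprice.symm)
  · have hprice := hstep.bid_eq_offer_of_phi_eq hΦ hnew fun h => hs ⟨b, h⟩
    exact le_antisymm (hprice.symm.trans_le (le_sup' _ (mem_univ b)))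
      (sup'_le _ _ fun b₃ _ => hI.le_unmatched_offer s hs b₃)
end

section
/- For any ε > 0 and any well-behaved ε-stable state (P, Π) of a market with n agents, there exists a sequence of at most n legal moves of the double-oral-auction mechanism, starting from the zero-information state, that reaches (P, Π). -/
open Finset

variable {B S : Type*} [Fintype B] [Fintype S]

variable [DecidableEq B] [DecidableEq S]

/-- The zero-information state: every buyer bids 0, every seller offers 1, no matches. -/
def zeroInfoState (B S : Type*) : MState B S := ⟨fun _ => 0, fun _ => 1, ∅⟩

/-- A well-behaved ε-stable state: on every edge with both endpoints unmatched the bid is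
strictly below the offer, and on every edge with at least one unmatched endpoint the bid
is at most the offer. -/
def WellBehaved (Mk : Market B S) (st : MState B S) : Prop :=
  (∀ p ∈ Mk.E, ¬ BMatched st p.1 → ¬ SMatched st p.2 → st.PB p.1 < st.PS p.2) ∧
  (∀ p ∈ Mk.E, (¬ BMatched st p.1 ∨ ¬ SMatched st p.2) → st.PB p.1 ≤ st.PS p.2)

/-! Agents are *revealed* one at a time: an unrevealed agent still submits his zero-information
price (bid 0, offer 1), a revealed one his price in the target state. Matched pairs come first, in
decreasing order of price: the buyer raises his bid to the pair's price and the seller matches him.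
Every offer the buyer sees is then 1 or the price of an earlier pair, hence at least his bid, so no
seller is interested in the raise; a pair at price 1 matches directly through the buyer instead.
Once all pairs stand, each unmatched agent moves to his valuation in one bid or offer, and
well-behavedness says exactly that no counterpart is interested in it. The run takes
`2 |M| + (|B| - |M|) + (|S| - |M|)` moves. -/

attribute [ext] MState

section Reach

variable (Mk : Market B S) (ε : ℝ)

def ReachesIn (k : ℕ) (X Y : MState B S) : Prop :=
  ∃ f : ℕ → MState B S, f 0 = X ∧ f k = Y ∧ ∀ i < k, Step Mk ε (f i) (f (i + 1))

def ReachesWithin (n : ℕ) (X Y : MState B S) : Prop :=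
  ∃ k ≤ n, ReachesIn Mk ε k X Y

variable {Mk ε}

theorem ReachesIn.append {k l : ℕ} {X Y Z : MState B S} (hXY : ReachesIn Mk ε k X Y)
    (hYZ : ReachesIn Mk ε l Y Z) : ReachesIn Mk ε (k + l) X Z := by
  obtain ⟨f, hf0, hfk, hf⟩ := hXY
  obtain ⟨g, hg0, hgl, hg⟩ := hYZ
  have hcat : ∀ i, k ≤ i → (if i ≤ k then f i else g (i - k)) = g (i - k) := by
    intro i hi
    split_ifs with h
    · rw [le_antisymm h hi, Nat.sub_self, hg0, hfk]
    · rfl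
  refine ⟨fun i => if i ≤ k then f i else g (i - k), by simp [hf0], ?_, fun i hi => ?_⟩
  · exact (hcat _ (Nat.le_add_right k l)).trans (by rw [Nat.add_sub_cancel_left, hgl])
  rcases lt_or_ge i k with hik | hik
  · simpa [hik.le, Nat.succ_le_of_lt hik] using hf i hik
  · dsimp only
    rw [hcat i hik, hcat (i + 1) (by omega), show i + 1 - k = i - k + 1 by omega]
    exact hg (i - k) (by omega)

theorem ReachesWithin.refl (n : ℕ) (X : MState B S) : ReachesWithin Mk ε n X X :=
  ⟨0, Nat.zero_le n, fun _ => X, rfl, rfl, fun _ hi => absurd hi (Nat.not_lt_zero _)⟩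

theorem ReachesWithin.single {X Y : MState B S} (h : Step Mk ε X Y) : ReachesWithin Mk ε 1 X Y :=
  ⟨1, le_rfl, fun i => if i = 0 then X else Y, rfl, rfl, fun i hi => by
    obtain rfl : i = 0 := by omega
    simpa using h⟩

theorem ReachesWithin.trans {m n : ℕ} {X Y Z : MState B S} (hXY : ReachesWithin Mk ε m X Y)
    (hYZ : ReachesWithin Mk ε n Y Z) : ReachesWithin Mk ε (m + n) X Z := by
  obtain ⟨k, hk, hXY⟩ := hXY
  obtain ⟨l, hl, hYZ⟩ := hYZ
  exact ⟨k + l, by omega, hXY.append hYZ⟩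

theorem ReachesWithin.mono {m n : ℕ} {X Y : MState B S} (h : ReachesWithin Mk ε m X Y)
    (hmn : m ≤ n) : ReachesWithin Mk ε n X Y := by
  obtain ⟨k, hk, hXY⟩ := h
  exact ⟨k, hk.trans hmn, hXY⟩

end Reach

structure IsWellBehavedEpsStable (Mk : Market B S) (ε : ℝ) (st : MState B S) : Prop where
  valid : ValidState Mk st
  epsStable : IsEpsStable Mk ε st
  wellBehaved : WellBehaved Mk st
  mulEpsB : ∀ b, MulEps ε (st.PB b)
  mulEpsS : ∀ s, MulEps ε (st.PS s)

namespace IsWellBehavedEpsStable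

variable {Mk : Market B S} {ε : ℝ} {st : MState B S}

omit [DecidableEq B] [DecidableEq S] in
theorem pb_le_one (h : IsWellBehavedEpsStable Mk ε st) (b : B) : st.PB b ≤ 1 :=
  (h.valid.2.1 b).trans (Mk.valB_le_one b)

omit [DecidableEq B] [DecidableEq S] in
theorem ps_nonneg (h : IsWellBehavedEpsStable Mk ε st) (s : S) : 0 ≤ st.PS s :=
  (Mk.valS_nonneg s).trans (h.valid.2.2.1 s)

omit [DecidableEq B] [DecidableEq S] in
theorem pb_nonneg (h : IsWellBehavedEpsStable Mk ε st) (b : B) : 0 ≤ st.PB b := by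
  by_cases hb : BMatched st b
  · obtain ⟨s, hbs⟩ := hb
    exact (h.epsStable.2.2.2 _ hbs).symm ▸ h.ps_nonneg s
  · exact (h.epsStable.2.1 b hb).symm ▸ Mk.valB_nonneg b

omit [DecidableEq B] [DecidableEq S] in
theorem ps_le_one (h : IsWellBehavedEpsStable Mk ε st) (s : S) : st.PS s ≤ 1 := by
  by_cases hs : SMatched st s
  · obtain ⟨b, hbs⟩ := hs
    exact h.epsStable.2.2.2 _ hbs ▸ h.pb_le_one b
  · exact (h.epsStable.2.2.1 s hs).symm ▸ Mk.valS_le_one s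

end IsWellBehavedEpsStable

namespace MState

open Function

/-- Partial realization of `st`: a pair of `st.M` counts as matched once its buyer is revealed. -/
def reveal (st : MState B S) (Db : Finset B) (Ds : Finset S) : MState B S where
  PB := Db.piecewise st.PB 0
  PS := Ds.piecewise st.PS 1
  M := st.M.filter fun p => p.1 ∈ Db

variable (st : MState B S) (Db : Finset B) (Ds : Finset S)

omit [Fintype B] [Fintype S] in
theorem reveal_empty : st.reveal ∅ ∅ = zeroInfoState B S := by
  ext <;> simp [reveal, zeroInfoState]

theorem reveal_univ : st.reveal univ univ = st := by
  ext <;> simp [reveal]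

omit [Fintype B] [Fintype S] in
theorem reveal_PB_le (h0 : ∀ b, 0 ≤ st.PB b) (b : B) : (st.reveal Db Ds).PB b ≤ st.PB b :=
  Db.piecewise_cases st.PB 0 (fun x => x ≤ st.PB b) le_rfl (h0 b)

omit [Fintype B] [Fintype S] in
theorem le_reveal_PS (h1 : ∀ s, st.PS s ≤ 1) (s : S) : st.PS s ≤ (st.reveal Db Ds).PS s :=
  Ds.piecewise_cases st.PS 1 (fun x => st.PS s ≤ x) le_rfl (h1 s)

omit [Fintype B] [Fintype S] in
theorem reveal_insert_seller (s : S) :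
    st.reveal Db (insert s Ds) =
      ⟨(st.reveal Db Ds).PB, update (st.reveal Db Ds).PS s (st.PS s), (st.reveal Db Ds).M⟩ := by
  ext1
  · rfl
  · exact Ds.piecewise_insert _ _ s
  · rfl

variable {st Db Ds}

omit [Fintype B] [Fintype S] in
theorem bMatched_reveal {b : B} : BMatched (st.reveal Db Ds) b ↔ b ∈ Db ∧ BMatched st b := by
  simp [BMatched, reveal, and_comm]

omit [Fintype B] [Fintype S] in
theorem sMatched_reveal (hcons : ∀ p ∈ st.M, p.1 ∈ Db ↔ p.2 ∈ Ds) {s : S} :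
    SMatched (st.reveal Db Ds) s ↔ s ∈ Ds ∧ SMatched st s := by
  simp only [SMatched, reveal, mem_filter]
  exact ⟨fun ⟨b, hbs, hb⟩ => ⟨(hcons _ hbs).1 hb, b, hbs⟩,
    fun ⟨hs, b, hbs⟩ => ⟨b, hbs, (hcons _ hbs).2 hs⟩⟩

omit [Fintype B] [Fintype S] in
theorem reveal_insert_buyer {b : B} (hb : ¬ BMatched st b) :
    st.reveal (insert b Db) Ds =
      ⟨update (st.reveal Db Ds).PB b (st.PB b), (st.reveal Db Ds).PS, (st.reveal Db Ds).M⟩ := by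
  ext1
  · exact Db.piecewise_insert _ _ b
  · rfl
  · refine filter_congr fun p hp => ?_
    rw [mem_insert, or_iff_right]
    exact fun hpb => hb ⟨p.2, hpb ▸ hp⟩

theorem reveal_insert_pair {Mk : Market B S} (hM : IsMatching Mk st.M) {b : B} {s : S}
    (hbs : (b, s) ∈ st.M) (hb : b ∉ Db) (hprice : st.PS s = st.PB b) :
    st.reveal (insert b Db) (insert s Ds) = matchPair (st.reveal Db Ds) b s (st.PB b) := by
  ext1
  · exact Db.piecewise_insert _ _ b
  · rw [← hprice]
    exact Ds.piecewise_insert _ _ s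
  · ext ⟨b', s'⟩
    simp only [reveal, matchPair, mem_filter, mem_insert, Prod.mk.injEq]
    constructor
    · rintro ⟨hp, rfl | hb'⟩
      · exact Or.inl ⟨rfl, congrArg Prod.snd (hM.2.1 _ hp _ hbs rfl)⟩
      · refine Or.inr ⟨⟨hp, hb'⟩, fun h => hb (h ▸ hb'), fun h => hb ?_⟩
        obtain ⟨rfl, -⟩ := Prod.mk.inj (hM.2.2 _ hp _ hbs h)
        exact hb'
    · rintro (⟨rfl, rfl⟩ | ⟨⟨hp, hb'⟩, -⟩)
      · exact ⟨hbs, Or.inl rfl⟩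
      · exact ⟨hp, Or.inr hb'⟩

end MState

open MState Function

variable {Mk : Market B S} {ε : ℝ} {st : MState B S} {Db : Finset B} {Ds : Finset S}

omit [Fintype B] [Fintype S] in
theorem SMatched.of_reveal {s : S} (hs : SMatched (st.reveal Db Ds) s) : SMatched st s :=
  let ⟨b, hbs⟩ := hs
  ⟨b, (mem_filter.1 hbs).1⟩

omit [Fintype B] [Fintype S] in
theorem matchPair_update_PB (X : MState B S) (b : B) (s : S) (x p : ℝ) :
    matchPair ⟨update X.PB b x, X.PS, X.M⟩ b s p = matchPair X b s p := by
  simp only [matchPair, update_idem]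

omit [DecidableEq S] in
theorem IsMatching.mem_image_fst_iff {Mk : Market B S} {M D : Finset (B × S)}
    (hM : IsMatching Mk M) (hD : D ⊆ M) {p : B × S} (hp : p ∈ M) : p.1 ∈ D.image Prod.fst ↔ p ∈ D :=
  ⟨fun hq => by
    obtain ⟨q, hq, hqp⟩ := mem_image.1 hq
    exact hM.2.1 q (hD hq) p hp hqp ▸ hq, fun hpD => mem_image_of_mem _ hpD⟩

omit [DecidableEq B] in
theorem IsMatching.mem_image_snd_iff {Mk : Market B S} {M D : Finset (B × S)}
    (hM : IsMatching Mk M) (hD : D ⊆ M) {p : B × S} (hp : p ∈ M) : p.2 ∈ D.image Prod.snd ↔ p ∈ D :=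
  ⟨fun hq => by
    obtain ⟨q, hq, hqp⟩ := mem_image.1 hq
    exact hM.2.2 q (hD hq) p hp hqp ▸ hq, fun hpD => mem_image_of_mem _ hpD⟩

theorem buyIncrOK_reveal (h : IsWellBehavedEpsStable Mk ε st)
    (hcons : ∀ p ∈ st.M, p.1 ∈ Db ↔ p.2 ∈ Ds) (b : B) :
    BuyIncrOK Mk ε (st.reveal Db Ds) b (st.PB b) := by
  refine ⟨fun s hbs => ?_, fun s hbs hs => ?_⟩
  · linarith [h.epsStable.1 _ hbs, le_reveal_PS st Db Ds h.ps_le_one s]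
  · by_cases hsD : s ∈ Ds
    · have hsu : ¬ SMatched st s := fun hm => hs ((sMatched_reveal hcons).2 ⟨hsD, hm⟩)
      simpa [reveal, hsD] using h.wellBehaved.2 _ hbs (Or.inr hsu)
    · simpa [reveal, hsD] using h.pb_le_one b

theorem sellIncrOK_reveal (h : IsWellBehavedEpsStable Mk ε st) (s : S) :
    SellIncrOK Mk ε (st.reveal Db Ds) s (st.PS s) := by
  refine ⟨fun b hbs => ?_, fun b hbs hb => ?_⟩
  · linarith [h.epsStable.1 _ hbs, reveal_PB_le st Db Ds h.pb_nonneg b]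
  · by_cases hbD : b ∈ Db
    · have hbu : ¬ BMatched st b := fun hm => hb (bMatched_reveal.2 ⟨hbD, hm⟩)
      simpa [reveal, hbD] using h.wellBehaved.2 _ hbs (Or.inl hbu)
    · simpa [reveal, hbD] using h.ps_nonneg s

theorem reachesWithin_update_PB {X : MState B S} {b : B} {p : ℝ} (hle : X.PB b ≤ p)
    (hstep : X.PB b < p → Step Mk ε X ⟨update X.PB b p, X.PS, X.M⟩) :
    ReachesWithin Mk ε 1 X ⟨update X.PB b p, X.PS, X.M⟩ := by
  rcases hle.lt_or_eq with hlt | rfl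
  · exact .single (hstep hlt)
  · rw [update_eq_self]
    exact .refl 1 X

theorem reachesWithin_update_PS {X : MState B S} {s : S} {p : ℝ} (hle : p ≤ X.PS s)
    (hstep : p < X.PS s → Step Mk ε X ⟨X.PB, update X.PS s p, X.M⟩) :
    ReachesWithin Mk ε 1 X ⟨X.PB, update X.PS s p, X.M⟩ := by
  rcases hle.lt_or_eq with hlt | rfl
  · exact .single (hstep hlt)
  · rw [update_eq_self]
    exact .refl 1 X

omit [DecidableEq S] in
theorem sellIncrOK_update_PB {X : MState B S} {s : S} {p : ℝ} (hX : SellIncrOK Mk ε X s p)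
    (hε : 0 ≤ ε) (b : B) {x : ℝ} (hx : x ≤ p) :
    SellIncrOK Mk ε ⟨update X.PB b x, X.PS, X.M⟩ s p := by
  refine ⟨fun b' hbs => ?_, fun b' hbs hb' => ?_⟩ <;> rcases eq_or_ne b' b with rfl | hne
  · simp only [update_self]
    linarith
  · simpa [update_of_ne hne] using hX.1 b' hbs
  · simpa using hx
  · simpa [update_of_ne hne] using hX.2 b' hbs hb'

theorem reachesWithin_reveal_insert_buyer (h : IsWellBehavedEpsStable Mk ε st) (hε : 0 < ε)
    (hcons : ∀ p ∈ st.M, p.1 ∈ Db ↔ p.2 ∈ Ds) {b : B} (hb : ¬ BMatched st b)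
    (hnbr : ∀ s, (b, s) ∈ Mk.E → SMatched st s → s ∈ Ds) :
    ReachesWithin Mk ε 1 (st.reveal Db Ds) (st.reveal (insert b Db) Ds) := by
  rw [reveal_insert_buyer hb]
  refine reachesWithin_update_PB (reveal_PB_le st Db Ds h.pb_nonneg b) fun hlt =>
    Step.buyBid _ b _ (fun hm => hb (bMatched_reveal.1 hm).2) hlt (h.valid.2.1 b) (h.mulEpsB b)
      (buyIncrOK_reveal h hcons b) ?_
  rintro s ⟨hbs, ⟨hsX, hle⟩ | ⟨-, hle⟩⟩
  · have hs : ¬ SMatched st s := fun hs => hsX ((sMatched_reveal hcons).2 ⟨hnbr s hbs hs, hs⟩)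
    linarith [h.wellBehaved.1 _ hbs hb hs, le_reveal_PS st Db Ds h.ps_le_one s]
  · linarith [h.wellBehaved.2 _ hbs (Or.inl hb), le_reveal_PS st Db Ds h.ps_le_one s]

theorem reachesWithin_reveal_insert_seller (h : IsWellBehavedEpsStable Mk ε st) (hε : 0 < ε)
    {s : S} (hs : ¬ SMatched st s) (hnbr : ∀ b, (b, s) ∈ Mk.E → BMatched st b → b ∈ Db) :
    ReachesWithin Mk ε 1 (st.reveal Db Ds) (st.reveal Db (insert s Ds)) := by
  rw [reveal_insert_seller]
  refine reachesWithin_update_PS (le_reveal_PS st Db Ds h.ps_le_one s) fun hlt =>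
    Step.sellOffer _ s _ (fun hm => hs hm.of_reveal) hlt (h.valid.2.2.1 s) (h.mulEpsS s)
      (sellIncrOK_reveal h s) ?_
  rintro b ⟨hbs, ⟨hbX, hle⟩ | ⟨-, hle⟩⟩
  · have hb : ¬ BMatched st b := fun hb => hbX (bMatched_reveal.2 ⟨hnbr b hbs hb, hb⟩)
    linarith [h.wellBehaved.1 _ hbs hb hs, reveal_PB_le st Db Ds h.pb_nonneg b]
  · linarith [h.wellBehaved.2 _ hbs (Or.inr hs), reveal_PB_le st Db Ds h.pb_nonneg b]

theorem reachesWithin_reveal_insert_pair (h : IsWellBehavedEpsStable Mk ε st) (hε : 0 < ε)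
    (hcons : ∀ p ∈ st.M, p.1 ∈ Db ↔ p.2 ∈ Ds) {b : B} {s : S} (hbs : (b, s) ∈ st.M)
    (hb : b ∉ Db) (hDs : ∀ s' ∈ Ds, SMatched st s' ∧ st.PB b ≤ st.PS s') :
    ReachesWithin Mk ε 2 (st.reveal Db Ds) (st.reveal (insert b Db) (insert s Ds)) := by
  have hprice : st.PS s = st.PB b := (h.epsStable.2.2.2 _ hbs).symm
  have hE : (b, s) ∈ Mk.E := h.valid.1.1 hbs
  have hs : s ∉ Ds := fun hs => hb ((hcons _ hbs).2 hs)
  rw [reveal_insert_pair h.valid.1 hbs hb hprice]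
  set X := st.reveal Db Ds
  have hbX : ¬ BMatched X b := fun hm => hb (bMatched_reveal.1 hm).1
  have hsX : ¬ SMatched X s := fun hm => hs ((sMatched_reveal hcons).1 hm).1
  have hXb : X.PB b = 0 := piecewise_eq_of_notMem _ _ _ hb
  have hXs : X.PS s = 1 := piecewise_eq_of_notMem _ _ _ hs
  rcases (h.pb_le_one b).lt_or_eq with hlt | heq
  · set X' : MState B S := ⟨update X.PB b (st.PB b), X.PS, X.M⟩
    have hbid : ReachesWithin Mk ε 1 X X' := by
      refine reachesWithin_update_PB (hXb ▸ h.pb_nonneg b) fun hpos =>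
        Step.buyBid X b _ hbX hpos (h.valid.2.1 b) (h.mulEpsB b) (buyIncrOK_reveal h hcons b) ?_
      rintro s' ⟨-, ⟨hsX', hle⟩ | ⟨hsX', hle⟩⟩
      · have hs' : s' ∉ Ds := fun hs' => hsX' ((sMatched_reveal hcons).2 ⟨hs', (hDs s' hs').1⟩)
        rw [show X.PS s' = 1 from piecewise_eq_of_notMem _ _ _ hs'] at hle
        linarith
      · have hs' : s' ∈ Ds := ((sMatched_reveal hcons).1 hsX').1
        rw [show X.PS s' = st.PS s' from piecewise_eq_of_mem _ _ _ hs'] at hle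
        linarith [(hDs s' hs').2]
    have hmatch : Step Mk ε X' (matchPair X' b s (st.PB b)) :=
      Step.sellMatch X' s _ b hsX (by rw [hXs]; exact h.pb_le_one b)
        (hprice ▸ h.valid.2.2.1 s) (hprice ▸ h.mulEpsS s)
        (hprice ▸ sellIncrOK_update_PB (sellIncrOK_reveal h s) hε.le b hprice.ge)
        ⟨hE, Or.inl ⟨hbX, (update_self b (st.PB b) X.PB).ge⟩⟩ fun _ => hbX
    rw [← matchPair_update_PB X b s (st.PB b) (st.PB b)]
    exact hbid.trans (.single hmatch)
  · refine (ReachesWithin.single ?_).mono one_le_two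
    exact Step.buyMatch X b _ s hbX (by rw [hXb]; exact h.pb_nonneg b) (h.valid.2.1 b)
      (h.mulEpsB b) (buyIncrOK_reveal h hcons b) ⟨hE, Or.inl ⟨hsX, by rw [hXs, heq]⟩⟩
      fun _ => hsX

theorem reachesWithin_reveal_pairs (h : IsWellBehavedEpsStable Mk ε st) (hε : 0 < ε)
    {D : Finset (B × S)} (hD : D ⊆ st.M) :
    ReachesWithin Mk ε (2 * #D) (zeroInfoState B S)
      (st.reveal (D.image Prod.fst) (D.image Prod.snd)) := by
  induction D using Finset.induction_on_min_value (fun p : B × S => st.PB p.1) with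
  | empty => simpa only [image_empty, reveal_empty] using .refl _ _
  | insert q D hqD hmin ih =>
    obtain ⟨b, s⟩ := q
    have hD' : D ⊆ st.M := (subset_insert _ _).trans hD
    have hbs : (b, s) ∈ st.M := hD (mem_insert_self _ _)
    rw [image_insert, image_insert, card_insert_of_notMem hqD, mul_add, mul_one]
    refine (ih hD').trans (reachesWithin_reveal_insert_pair h hε ?_ hbs ?_ ?_)
    · exact fun p hp => ((h.valid.1.mem_image_fst_iff hD' hp).trans
        (h.valid.1.mem_image_snd_iff hD' hp).symm)
    · exact fun hb => hqD ((h.valid.1.mem_image_fst_iff hD' (p := (b, s)) hbs).1 hb)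
    · simp only [mem_image]
      rintro _ ⟨q, hq, rfl⟩
      exact ⟨⟨q.1, hD' hq⟩, (h.epsStable.2.2.2 q (hD' hq)) ▸ hmin q hq⟩

theorem reachesWithin_reveal_unmatched_buyers (h : IsWellBehavedEpsStable Mk ε st) (hε : 0 < ε)
    {U : Finset B} (hU : ∀ b ∈ U, ¬ BMatched st b) :
    ReachesWithin Mk ε (2 * #st.M + #U) (zeroInfoState B S)
      (st.reveal (st.M.image Prod.fst ∪ U) (st.M.image Prod.snd)) := by
  induction U using Finset.induction_on with
  | empty => simpa using reachesWithin_reveal_pairs h hε subset_rfl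
  | insert b U hbU ih =>
    rw [union_insert, card_insert_of_notMem hbU, ← add_assoc]
    refine (ih fun b' hb' => hU b' (mem_insert_of_mem hb')).trans
      (reachesWithin_reveal_insert_buyer h hε ?_ (hU b (mem_insert_self b U)) ?_)
    · exact fun p hp => iff_of_true (mem_union_left _ (mem_image_of_mem _ hp))
        (mem_image_of_mem _ hp)
    · rintro s - ⟨b', hbs⟩
      exact mem_image_of_mem Prod.snd hbs

theorem reachesWithin_reveal_unmatched_sellers (h : IsWellBehavedEpsStable Mk ε st) (hε : 0 < ε)
    {U : Finset S} (hU : ∀ s ∈ U, ¬ SMatched st s) :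
    ReachesWithin Mk ε (2 * #st.M + #(st.M.image Prod.fst)ᶜ + #U) (zeroInfoState B S)
      (st.reveal univ (st.M.image Prod.snd ∪ U)) := by
  induction U using Finset.induction_on with
  | empty =>
    rw [← union_compl (st.M.image Prod.fst), union_empty, card_empty, add_zero]
    refine reachesWithin_reveal_unmatched_buyers h hε fun b hb ⟨s, hbs⟩ => ?_
    exact mem_compl.1 hb (mem_image_of_mem Prod.fst hbs)
  | insert s U hsU ih =>
    rw [union_insert, card_insert_of_notMem hsU, ← add_assoc]
    refine (ih fun s' hs' => hU s' (mem_insert_of_mem hs')).trans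
      (reachesWithin_reveal_insert_seller h hε (hU s (mem_insert_self s U)) ?_)
    exact fun b _ _ => mem_univ b

theorem IsMatching.two_mul_card_add_card_unmatched {Mk : Market B S} {M : Finset (B × S)}
    (hM : IsMatching Mk M) :
    2 * #M + #(M.image Prod.fst)ᶜ + #(M.image Prod.snd)ᶜ = Fintype.card B + Fintype.card S := by
  have hfst : #(M.image Prod.fst) = #M := card_image_of_injOn fun p hp q hq => hM.2.1 p hp q hq
  have hsnd : #(M.image Prod.snd) = #M := card_image_of_injOn fun p hp q hq => hM.2.2 p hp q hq
  rw [card_compl, card_compl, hfst, hsnd]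
  have := hfst ▸ card_le_univ (M.image Prod.fst)
  have := hsnd ▸ card_le_univ (M.image Prod.snd)
  omega

/-- any well-behaved ε-stable state is reachable from the zero-information
state by a sequence of at most `n` legal moves of the DOA mechanism. -/
theorem well_behaved_eps_stable_reachable
    (Mk : Market B S) (ε : ℝ) (hε : 0 < ε)
    (st : MState B S) (hvalid : ValidState Mk st)
    (hstable : IsEpsStable Mk ε st) (hwb : WellBehaved Mk st)
    (hmulB : ∀ b, MulEps ε (st.PB b)) (hmulS : ∀ s, MulEps ε (st.PS s)) :
    ∃ (k : ℕ) (f : ℕ → MState B S), k ≤ Fintype.card B + Fintype.card S ∧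
      f 0 = zeroInfoState B S ∧ f k = st ∧
      ∀ i < k, Step Mk ε (f i) (f (i + 1)) := by
  have h : IsWellBehavedEpsStable Mk ε st := ⟨hvalid, hstable, hwb, hmulB, hmulS⟩
  obtain ⟨k, hk, f, hf0, hfk, hf⟩ := reachesWithin_reveal_unmatched_sellers h hε
    (U := (st.M.image Prod.snd)ᶜ) fun s hs ⟨b, hbs⟩ =>
      mem_compl.1 hs (mem_image_of_mem Prod.snd hbs)
  rw [union_compl, reveal_univ] at hfk
  exact ⟨k, f, hk.trans hvalid.1.two_mul_card_add_card_unmatched.le, hf0, hfk, hf⟩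
end
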